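/- arXiv:2210.05455 — 9 statements merged into one kernel-verified Lean document; each statement's English description precedes it below -/
import Mathlib

section
/- Let C ⊆ {0,1}^n be a nonempty concept class. Then the minimum over all b ∈ {0,1}^n of the VC dimension of the intersection closure of C ⊕ b equals the least k ≥ 0 such that C satisfies the k-close cube condition. -/
variable {n : ℕ}

/-- Coordinatewise intersection (Boolean product) of two vertices. -/
def interV {α : Type*} (v w : α → Bool) : α → Bool := fun i => v i && w i

/-- A class is intersection closed if it is closed under coordinatewise products. -/
def IntersectionClosed {α : Type*} (C : Set (α → Bool)) : Prop :=
  ∀ v ∈ C, ∀ w ∈ C, interV v w ∈ C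

/-- The intersection closure: all iterated intersections of nonempty finite subsets. -/
def interClosure {α : Type*} (C : Set (α → Bool)) : Set (α → Bool) :=
  {x | ∃ S : Finset (α → Bool), S.Nonempty ∧ ↑S ⊆ C ∧ x = fun i => S.inf fun u => u i}

/-- Coordinate projection to the coordinates in `J`. -/
def proj (J : Finset (Fin n)) (v : Fin n → Bool) : {i // i ∈ J} → Bool := fun j => v j.1

/-- `C` shatters `I` if the projection of `C` to `I` is the full cube. -/
def Shatters (C : Set (Fin n → Bool)) (I : Finset (Fin n)) : Prop :=
  proj I '' C = Set.univ

/-- The VC dimension: the largest cardinality of a shattered set of coordinates. -/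
noncomputable def VCdim (C : Set (Fin n → Bool)) : ℕ :=
  sSup {k | ∃ I : Finset (Fin n), I.card = k ∧ Shatters C I}

/-- A shortest path in `A` from `u` to `v`: a sequence of length `hammingDist u v`
starting at `u`, ending at `v`, with all vertices in `A` and consecutive vertices
at Hamming distance `1`. -/
def IsShortestPath (A : Set (Fin n → Bool)) (u v : Fin n → Bool)
    (seq : Fin (hammingDist u v + 1) → Fin n → Bool) : Prop :=
  seq 0 = u ∧ seq (Fin.last (hammingDist u v)) = v ∧ (∀ i, seq i ∈ A) ∧
    ∀ i : Fin (hammingDist u v), hammingDist (seq i.castSucc) (seq i.succ) = 1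

/-- A class is shortest-path closed if any two of its vertices are joined by a
shortest path inside the class. -/
def SPClosed (C : Set (Fin n → Bool)) : Prop :=
  ∀ u ∈ C, ∀ v ∈ C, ∃ seq, IsShortestPath C u v seq

/-- A cube with colour set `I` (and some anchor `a` outside `I`). -/
def IsCubeOn (I : Finset (Fin n)) (c : Set (Fin n → Bool)) : Prop :=
  ∃ a : Fin n → Bool, c = {v | ∀ i, i ∉ I → v i = a i}

/-- A cube (with some colour set). -/
def IsCube (c : Set (Fin n → Bool)) : Prop := ∃ I, IsCubeOn I c

/-- `c` is a maximal cube of `A`: a cube contained in `A` not properly contained in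
another cube contained in `A`. -/
def MaximalCubeIn (A c : Set (Fin n → Bool)) : Prop :=
  IsCube c ∧ c ⊆ A ∧ ∀ c', IsCube c' → c' ⊆ A → c ⊆ c' → c' = c

/-- A class is extremal if every shattered colour set is witnessed by a cube inside
the class. -/
def Extremal (C : Set (Fin n → Bool)) : Prop :=
  ∀ I : Finset (Fin n), Shatters C I → ∃ c, IsCubeOn I c ∧ c ⊆ C

/-- The cubical colour condition for the pair `(C, D)`: every cube contained in `C`
that is not maximal in `C` has a cube in `D` with the same colour set. -/
def CCC (C D : Set (Fin n → Bool)) : Prop :=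
  ∀ I c, IsCubeOn I c → c ⊆ C → ¬ MaximalCubeIn C c →
    ∃ c', IsCubeOn I c' ∧ c' ⊆ D

/-- `A` has an edge of colour `i`: two vertices of `A` differing exactly at `i`. -/
def HasEdge (A : Set (Fin n → Bool)) (i : Fin n) : Prop :=
  ∃ v ∈ A, ∃ w ∈ A, v i ≠ w i ∧ ∀ j, j ≠ i → v j = w j

/-- An unlabelled compression scheme of size `k` for `C`. -/
def HasCompression (C : Set (Fin n → Bool)) (k : ℕ) : Prop :=
  ∃ r : (Fin n → Bool) → Finset (Fin n),
    Set.InjOn r C ∧ (∀ v ∈ C, (r v).card ≤ k) ∧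
      ∀ v ∈ C, ∀ w ∈ C, v ≠ w → ∃ i ∈ r v ∪ r w, v i ≠ w i

/-- Coordinates where `v` is `1` but `w` is `0`. -/
def delta (v w : Fin n → Bool) : Finset (Fin n) :=
  Finset.univ.filter fun i => v i = true ∧ w i = false

/-- The vertex obtained from `v` by setting to `0` the `j` smallest (in the order
induced by the permutation `π`) coordinates of `delta v w`. -/
def stepVert (π : Equiv.Perm (Fin n)) (v w : Fin n → Bool) (j : ℕ) : Fin n → Bool :=
  fun i =>
    if i ∈ delta v w ∧ ((delta v w).filter fun i' => π i' < π i).card < j then false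
    else v i

/-- The shortest-path closure construction of `C` (with respect to the linear order
on coordinates induced by `π`). -/
def spClosure (π : Equiv.Perm (Fin n)) (C : Set (Fin n → Bool)) : Set (Fin n → Bool) :=
  {x | ∃ v ∈ C, ∃ w ∈ C, w ≤ v ∧ ∃ j ≤ (delta v w).card, x = stepVert π v w j}

/-- Coordinatewise XOR with `b` (a change of origin). -/
def xorShift (b : Fin n → Bool) (C : Set (Fin n → Bool)) : Set (Fin n → Bool) :=
  (fun v i => xor (v i) (b i)) '' C

/-- The `k`-close cube condition. -/
def KCloseCube (C : Set (Fin n → Bool)) (k : ℕ) : Prop :=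
  ∃ v : Fin n → Bool, ∀ J : Finset (Fin n), J.card = k + 1 →
    ∃ b : {i // i ∈ J} → Bool, hammingDist b (proj J v) ≤ 1 ∧ b ∉ proj J '' C

lemma bool_inf_eq_true {β : Type*} {s : Finset β} {f : β → Bool} :
    s.inf f = true ↔ ∀ b ∈ s, f b = true := Finset.inf_eq_top_iff f s

lemma bool_inf_eq_false {β : Type*} {s : Finset β} {f : β → Bool} :
    s.inf f = false ↔ ∃ b ∈ s, f b = false := by
  constructor
  · intro h
    by_contra hc
    push_neg at hc
    have ht : s.inf f = true := bool_inf_eq_true.mpr (fun b hb => by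
      cases hfb : f b
      · exact absurd hfb (hc b hb)
      · rfl)
    rw [ht] at h
    cases h
  · rintro ⟨b, hb, hfb⟩
    have h1 : s.inf f ≤ f b := Finset.inf_le hb
    rw [hfb] at h1
    exact le_bot_iff.mp h1

lemma hammingDist_xor_aux {ι : Type*} [Fintype ι] (f g h : ι → Bool) :
    hammingDist (fun i => xor (f i) (h i)) (fun i => xor (g i) (h i)) = hammingDist f g := by
  simp only [hammingDist]
  congr 1
  apply Finset.filter_congr
  intro i _
  cases f i <;> cases g i <;> cases h i <;> simp

lemma mem_interClosure_self {α : Type*} {D : Set (α → Bool)} {x : α → Bool} (hx : x ∈ D) :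
    x ∈ interClosure D := by
  refine ⟨{x}, Finset.singleton_nonempty x, by simpa using hx, ?_⟩
  funext i
  simp

lemma shatters_interClosure_iff (D : Set (Fin n → Bool)) (I : Finset (Fin n)) :
    Shatters (interClosure D) I ↔
      ∀ c : {i // i ∈ I} → Bool, hammingDist c (fun _ => true) ≤ 1 → c ∈ proj I '' D := by
  classical
  constructor
  · intro hsh c hc
    have hmem : c ∈ proj I '' interClosure D := by rw [hsh]; trivial
    obtain ⟨x, ⟨S, hSne, hSD, hxS⟩, hpx⟩ := hmem
    have hxi : ∀ i : {i // i ∈ I}, (S.inf fun u => u i.1) = c i := by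
      intro i
      rw [← hpx, hxS]
      rfl
    by_cases hct : c = fun _ => true
    · obtain ⟨u, hu⟩ := hSne
      refine ⟨u, hSD hu, ?_⟩
      funext i
      show u i.1 = c i
      have h1 := hxi i
      rw [hct] at h1 ⊢
      exact bool_inf_eq_true.mp h1 u hu
    · obtain ⟨i0, hi0⟩ : ∃ i0, c i0 = false := by
        by_contra h
        push_neg at h
        exact hct (funext fun i => by
          cases hci : c i
          · exact absurd hci (h i)
          · rfl)
      have hcard : ({i | c i ≠ true} : Finset _).card ≤ 1 := hc
      have huniq : ∀ i, c i = false → i = i0 := by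
        intro i hi
        have h1 : i ∈ ({j | c j ≠ true} : Finset _) := by simp [hi]
        have h2 : i0 ∈ ({j | c j ≠ true} : Finset _) := by simp [hi0]
        exact Finset.card_le_one.mp hcard i h1 i0 h2
      obtain ⟨u0, hu0S, hu0⟩ : ∃ u0 ∈ S, u0 i0.1 = false :=
        bool_inf_eq_false.mp ((hxi i0).trans hi0)
      refine ⟨u0, hSD hu0S, ?_⟩
      funext i
      show u0 i.1 = c i
      by_cases hii : i = i0
      · subst hii
        rw [hu0, hi0]
      · have hci : c i = true := by
          cases hcc : c i
          · exact absurd (huniq i hcc) hii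
          · rfl
        rw [hci]
        exact bool_inf_eq_true.mp ((hxi i).trans hci) u0 hu0S
  · intro h
    rw [Shatters, Set.eq_univ_iff_forall]
    intro c
    have htop : (fun _ => true) ∈ proj I '' D := h _ (by simp [hammingDist])
    obtain ⟨xt, hxtD, hxt⟩ := htop
    have hone : ∀ i0 : {i // i ∈ I}, (fun i => if i = i0 then false else true) ∈ proj I '' D := by
      intro i0
      apply h
      have heq : ({i | (fun i => if i = i0 then false else true) i ≠ (fun _ => true) i} :
          Finset _) = {i0} := by
        ext i
        by_cases hi : i = i0 <;> simp [hi]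
      simp only [hammingDist, heq]
      simp
    choose g hgD hg using hone
    set F : Finset {i // i ∈ I} := {i | c i = false} with hF
    refine ⟨fun i => (insert xt (F.image g)).inf fun u => u i, ?_, ?_⟩
    · refine ⟨insert xt (F.image g), ⟨xt, Finset.mem_insert_self _ _⟩, ?_, rfl⟩
      intro u hu
      simp only [Finset.coe_insert, Set.mem_insert_iff, Finset.coe_image,
        Set.mem_image] at hu
      rcases hu with h1 | ⟨j, _, rfl⟩
      · exact h1 ▸ hxtD
      · exact hgD j
    · funext i
      show (insert xt (F.image g)).inf (fun u => u i.1) = c i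
      rw [Finset.inf_insert, Finset.inf_image]
      have hxti : xt i.1 = true := congrFun hxt i
      have htop' : (true ⊓ F.inf ((fun u => u i.1) ∘ g) : Bool) =
          F.inf ((fun u => u i.1) ∘ g) := top_inf_eq _
      rw [hxti, htop']
      cases hci : c i
      · have hiF : i ∈ F := by simp [hF, hci]
        apply bool_inf_eq_false.mpr
        refine ⟨i, hiF, ?_⟩
        have hgi : g i i.1 = (if i = i then false else true) := congrFun (hg i) i
        simpa using hgi
      · apply bool_inf_eq_true.mpr
        intro j hjF
        have hgj : g j i.1 = (if i = j then false else true) := congrFun (hg j) i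
        have hij : i ≠ j := by
          intro hij
          have hcj : c j = false := by simpa [hF] using hjF
          rw [← hij, hci] at hcj
          cases hcj
        show g j i.1 = true
        rw [hgj, if_neg hij]

lemma shatters_mono {D : Set (Fin n → Bool)} {I I' : Finset (Fin n)}
    (h : Shatters D I) (hsub : I' ⊆ I) : Shatters D I' := by
  classical
  rw [Shatters, Set.eq_univ_iff_forall]
  intro c'
  have : (fun i : {i // i ∈ I} => if h : i.1 ∈ I' then c' ⟨i.1, h⟩ else false)
      ∈ proj I '' D := by rw [h]; trivial
  obtain ⟨x, hxD, hx⟩ := this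
  refine ⟨x, hxD, ?_⟩
  funext i
  have h2 := congrFun hx ⟨i.1, hsub i.2⟩
  simp only [i.2, dif_pos] at h2
  exact h2

lemma shatters_empty {D : Set (Fin n → Bool)} (hD : D.Nonempty) :
    Shatters D (∅ : Finset (Fin n)) := by
  rw [Shatters, Set.eq_univ_iff_forall]
  intro c
  obtain ⟨x, hx⟩ := hD
  refine ⟨x, hx, ?_⟩
  funext i
  exact absurd i.2 (Finset.notMem_empty _)

lemma vcdim_bddAbove (D : Set (Fin n → Bool)) :
    BddAbove {k | ∃ I : Finset (Fin n), I.card = k ∧ Shatters D I} := by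
  refine ⟨n, ?_⟩
  rintro k ⟨I, rfl, -⟩
  simpa using Finset.card_le_card (Finset.subset_univ I)

lemma VCdim_le_iff {D : Set (Fin n → Bool)} (hD : D.Nonempty) (k : ℕ) :
    VCdim D ≤ k ↔ ∀ J : Finset (Fin n), J.card = k + 1 → ¬ Shatters D J := by
  unfold VCdim
  constructor
  · intro hle J hJ hsh
    have hmem : k + 1 ∈ {m | ∃ I : Finset (Fin n), I.card = m ∧ Shatters D I} :=
      ⟨J, hJ, hsh⟩
    have := le_csSup (vcdim_bddAbove D) hmem
    omega
  · intro h
    apply csSup_le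
    · exact ⟨0, ∅, Finset.card_empty, shatters_empty hD⟩
    rintro m ⟨I, rfl, hsh⟩
    by_contra hm
    push_neg at hm
    obtain ⟨I', hsub, hcard⟩ := Finset.exists_subset_card_eq (s := I) (n := k + 1) (by omega)
    exact h I' hcard (shatters_mono hsh hsub)

lemma mem_proj_xorShift (b : Fin n → Bool) (C : Set (Fin n → Bool)) (J : Finset (Fin n))
    (c : {i // i ∈ J} → Bool) :
    c ∈ proj J '' (xorShift b C) ↔ (fun i => xor (c i) (b i.1)) ∈ proj J '' C := by
  constructor
  · rintro ⟨x, ⟨y, hyC, rfl⟩, rfl⟩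
    refine ⟨y, hyC, ?_⟩
    funext i
    show y i.1 = xor (xor (y i.1) (b i.1)) (b i.1)
    cases y i.1 <;> cases b i.1 <;> rfl
  · rintro ⟨y, hyC, hy⟩
    refine ⟨fun i => xor (y i) (b i), ⟨y, hyC, rfl⟩, ?_⟩
    funext i
    have := congrFun hy i
    show xor (y i.1) (b i.1) = c i
    rw [show y i.1 = xor (c i) (b i.1) from this]
    cases c i <;> cases b i.1 <;> rfl

lemma key_equiv (C : Set (Fin n → Bool)) (hC : C.Nonempty) (k : ℕ) :
    (∃ b, VCdim (interClosure (xorShift b C)) ≤ k) ↔ KCloseCube C k := by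
  constructor
  · rintro ⟨b, hb⟩
    have hne : (interClosure (xorShift b C)).Nonempty := by
      obtain ⟨x, hx⟩ := hC
      exact ⟨_, mem_interClosure_self ⟨x, hx, rfl⟩⟩
    rw [VCdim_le_iff hne] at hb
    refine ⟨fun i => !(b i), fun J hJ => ?_⟩
    have hns := hb J hJ
    rw [shatters_interClosure_iff] at hns
    push_neg at hns
    obtain ⟨c, hc1, hc2⟩ := hns
    refine ⟨fun i => xor (c i) (b i.1), ?_, ?_⟩
    · have hpv : proj J (fun i => !(b i)) = fun i : {i // i ∈ J} => xor true (b i.1) := by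
        funext i
        show (fun i => !(b i)) i.1 = xor true (b i.1)
        simp
      rw [hpv]
      calc hammingDist (fun i : {i // i ∈ J} => xor (c i) (b i.1))
            (fun i => xor true (b i.1))
          = hammingDist c (fun _ => true) :=
            hammingDist_xor_aux c (fun _ => true) (fun i => b i.1)
        _ ≤ 1 := hc1
    · intro hmem
      exact hc2 ((mem_proj_xorShift b C J c).mpr hmem)
  · rintro ⟨v, hv⟩
    refine ⟨fun i => !(v i), ?_⟩
    have hne : (interClosure (xorShift (fun i => !(v i)) C)).Nonempty := by
      obtain ⟨x, hx⟩ := hC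
      exact ⟨_, mem_interClosure_self ⟨x, hx, rfl⟩⟩
    rw [VCdim_le_iff hne]
    intro J hJ hsh
    rw [shatters_interClosure_iff] at hsh
    obtain ⟨b', hd, hnm⟩ := hv J hJ
    have hdist : hammingDist (fun i : {i // i ∈ J} => xor (b' i) (!(v i.1)))
        (fun _ => true) ≤ 1 := by
      have h1 : (fun _ : {i // i ∈ J} => true) =
          fun i : {i // i ∈ J} => xor (v i.1) (!(v i.1)) := by
        funext i
        cases v i.1 <;> rfl
      rw [h1, hammingDist_xor_aux]
      exact hd
    have hm := hsh _ hdist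
    rw [mem_proj_xorShift] at hm
    apply hnm
    have heq : (fun i : {i // i ∈ J} => xor (xor (b' i) (!(v i.1))) (!(v i.1))) = b' := by
      funext i
      cases b' i <;> cases v i.1 <;> rfl
    rwa [heq] at hm


/-- For a nonempty class `C`, the minimum over all origins `b` of the
VC dimension of the intersection closure of `C ⊕ b` equals the least `k` for which `C`
satisfies the `k`-close cube condition. -/
theorem min_VCdim_interClosure_eq_least_closeCube (C : Set (Fin n → Bool))
    (hC : C.Nonempty) :
    sInf (Set.range fun b : Fin n → Bool => VCdim (interClosure (xorShift b C))) =
      sInf {k : ℕ | KCloseCube C k} := by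
  set f := fun b : Fin n → Bool => VCdim (interClosure (xorShift b C)) with hf
  have key := key_equiv C hC
  have hAne : (Set.range f).Nonempty := Set.range_nonempty f
  have hmem := Nat.sInf_mem hAne
  rw [Set.mem_range] at hmem
  obtain ⟨b0, hb0⟩ := hmem
  have hT : KCloseCube C (sInf (Set.range f)) := (key _).mp ⟨b0, hb0.le⟩
  have hTne : {k | KCloseCube C k}.Nonempty := ⟨_, hT⟩
  apply le_antisymm
  · obtain ⟨b, hb⟩ := (key _).mpr (Nat.sInf_mem hTne)
    exact (Nat.sInf_le (Set.mem_range_self b)).trans hb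
  · exact Nat.sInf_le hT
end

section
/- If a nonempty concept class C ⊆ {0,1}^n is shortest-path closed and intersection closed, then C is extremal. -/
variable {n : ℕ}

lemma hamming_card (x y : Fin n → Bool) :
    hammingDist x y = (Finset.univ.filter fun i => x i ≠ y i).card := rfl

/-- If distances add up exactly, a midpoint agrees with the endpoints wherever they agree. -/
lemma coord_of_dist_add {x z y : Fin n → Bool} {j : Fin n}
    (h : hammingDist x z + hammingDist z y = hammingDist x y)
    (hj : x j = y j) : z j = x j := by
  classical
  by_contra hzx
  have hzy : z j ≠ y j := fun hc => hzx (hc.trans hj.symm)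
  set A := (Finset.univ.filter fun i => x i ≠ z i) with hA
  set B := (Finset.univ.filter fun i => z i ≠ y i) with hB
  set D := (Finset.univ.filter fun i => x i ≠ y i) with hD
  have hsub : D ⊆ A ∪ B := by
    intro i hi
    simp only [hD, Finset.mem_filter, Finset.mem_univ, true_and] at hi
    simp only [hA, hB, Finset.mem_union, Finset.mem_filter, Finset.mem_univ, true_and]
    by_contra hcon
    push_neg at hcon
    exact hi (hcon.1.symm ▸ hcon.2)
  have hj2 : j ∈ A ∩ B := by
    simp only [hA, hB, Finset.mem_inter, Finset.mem_filter, Finset.mem_univ, true_and]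
    exact ⟨fun hc => hzx hc.symm, hzy⟩
  have h1 : D.card ≤ (A ∪ B).card := Finset.card_le_card hsub
  have h2 : 1 ≤ (A ∩ B).card := Finset.card_pos.mpr ⟨j, hj2⟩
  have h3 := Finset.card_union_add_card_inter A B
  have e1 : hammingDist x z = A.card := rfl
  have e2 : hammingDist z y = B.card := rfl
  have e3 : hammingDist x y = D.card := rfl
  omega

section walk

variable {m : ℕ} {seq : Fin (m + 1) → Fin n → Bool}

lemma walk_le_left (hstep : ∀ i : Fin m, hammingDist (seq i.castSucc) (seq i.succ) = 1) :
    ∀ k (hk : k ≤ m), hammingDist (seq 0) (seq ⟨k, Nat.lt_succ_of_le hk⟩) ≤ k := by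
  intro k
  induction k with
  | zero =>
    intro _
    have : (⟨0, Nat.lt_succ_of_le (Nat.zero_le m)⟩ : Fin (m+1)) = 0 := rfl
    rw [this, hammingDist_self]
  | succ k ih =>
    intro hk
    have hk' : k ≤ m := Nat.le_of_succ_le hk
    have hstepk := hstep ⟨k, hk⟩
    have hcs : (⟨k, hk⟩ : Fin m).castSucc = ⟨k, Nat.lt_succ_of_le hk'⟩ := rfl
    have hsu : (⟨k, hk⟩ : Fin m).succ = ⟨k+1, Nat.lt_succ_of_le hk⟩ := rfl
    rw [hcs, hsu] at hstepk
    calc hammingDist (seq 0) (seq ⟨k+1, Nat.lt_succ_of_le hk⟩)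
        ≤ hammingDist (seq 0) (seq ⟨k, Nat.lt_succ_of_le hk'⟩)
          + hammingDist (seq ⟨k, Nat.lt_succ_of_le hk'⟩) (seq ⟨k+1, Nat.lt_succ_of_le hk⟩) :=
        hammingDist_triangle _ _ _
      _ ≤ k + 1 := by rw [hstepk]; exact Nat.add_le_add_right (ih hk') 1

lemma walk_le_right (hstep : ∀ i : Fin m, hammingDist (seq i.castSucc) (seq i.succ) = 1) :
    ∀ k (hk : k ≤ m),
      hammingDist (seq ⟨m - k, Nat.lt_succ_of_le (Nat.sub_le m k)⟩) (seq (Fin.last m)) ≤ k := by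
  intro k
  induction k with
  | zero =>
    intro _
    have : (⟨m - 0, Nat.lt_succ_of_le (Nat.sub_le m 0)⟩ : Fin (m+1)) = Fin.last m := by
      apply Fin.ext; simp [Fin.last]
    rw [this, hammingDist_self]
  | succ k ih =>
    intro hk
    have hk' : k ≤ m := Nat.le_of_succ_le hk
    have hlt : m - (k+1) < m := by omega
    have hstepk := hstep ⟨m - (k+1), hlt⟩
    have hcs : (⟨m - (k+1), hlt⟩ : Fin m).castSucc
        = ⟨m - (k+1), Nat.lt_succ_of_le (Nat.sub_le m (k+1))⟩ := rfl
    have hsu : (⟨m - (k+1), hlt⟩ : Fin m).succ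
        = ⟨m - k, Nat.lt_succ_of_le (Nat.sub_le m k)⟩ := by
      apply Fin.ext
      show m - (k+1) + 1 = m - k
      omega
    rw [hcs, hsu] at hstepk
    calc hammingDist (seq ⟨m - (k+1), Nat.lt_succ_of_le (Nat.sub_le m (k+1))⟩) (seq (Fin.last m))
        ≤ hammingDist (seq ⟨m - (k+1), Nat.lt_succ_of_le (Nat.sub_le m (k+1))⟩)
            (seq ⟨m - k, Nat.lt_succ_of_le (Nat.sub_le m k)⟩)
          + hammingDist (seq ⟨m - k, Nat.lt_succ_of_le (Nat.sub_le m k)⟩) (seq (Fin.last m)) :=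
        hammingDist_triangle _ _ _
      _ ≤ 1 + k := by rw [hstepk]; exact Nat.add_le_add_left (ih hk') 1
      _ = k + 1 := Nat.add_comm 1 k

lemma walk_flip (hstep : ∀ i : Fin m, hammingDist (seq i.castSucc) (seq i.succ) = 1)
    {i : Fin n} (hne : seq 0 i ≠ seq (Fin.last m) i) :
    ∃ t : Fin m, seq t.castSucc i = seq 0 i ∧ seq t.succ i ≠ seq 0 i := by
  by_contra hcon
  push_neg at hcon
  have hall : ∀ k (hk : k ≤ m), seq ⟨k, Nat.lt_succ_of_le hk⟩ i = seq 0 i := by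
    intro k
    induction k with
    | zero => intro _; rfl
    | succ k ih =>
      intro hk
      have hk' : k ≤ m := Nat.le_of_succ_le hk
      have h1 := hcon ⟨k, hk⟩ (by
        rw [show (⟨k, hk⟩ : Fin m).castSucc = ⟨k, Nat.lt_succ_of_le hk'⟩ from rfl]
        exact ih hk')
      rw [show (⟨k, hk⟩ : Fin m).succ = ⟨k+1, Nat.lt_succ_of_le hk⟩ from rfl] at h1
      exact h1
  have h2 := hall m le_rfl
  rw [show (⟨m, Nat.lt_succ_of_le le_rfl⟩ : Fin (m+1)) = Fin.last m from rfl] at h2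
  exact hne h2.symm

end walk

section path

variable {u v : Fin n → Bool} {seq : Fin (hammingDist u v + 1) → Fin n → Bool}

lemma seq_dist_add (h0 : seq 0 = u) (hl : seq (Fin.last (hammingDist u v)) = v)
    (hstep : ∀ i : Fin (hammingDist u v), hammingDist (seq i.castSucc) (seq i.succ) = 1)
    (t : Fin (hammingDist u v + 1)) :
    hammingDist u (seq t) + hammingDist (seq t) v = hammingDist u v := by
  have htle : t.1 ≤ hammingDist u v := Nat.lt_succ_iff.mp t.2
  have h1 := walk_le_left hstep t.1 htle
  have h2 := walk_le_right hstep (hammingDist u v - t.1) (Nat.sub_le _ _)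
  rw [h0] at h1
  rw [hl] at h2
  have hteq1 : (⟨t.1, Nat.lt_succ_of_le htle⟩ : Fin (hammingDist u v + 1)) = t := by
    apply Fin.ext; rfl
  have hteq : (⟨hammingDist u v - (hammingDist u v - t.1),
      Nat.lt_succ_of_le (Nat.sub_le _ _)⟩ : Fin (hammingDist u v + 1)) = t := by
    apply Fin.ext
    show hammingDist u v - (hammingDist u v - t.1) = t.1
    omega
  rw [hteq1] at h1
  rw [hteq] at h2
  have h3 : hammingDist u v ≤ hammingDist u (seq t) + hammingDist (seq t) v :=
    hammingDist_triangle u (seq t) v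
  omega

/-- Coordinates equal at the endpoints are constant along a shortest path. -/
lemma seq_coord_const (h0 : seq 0 = u) (hl : seq (Fin.last (hammingDist u v)) = v)
    (hstep : ∀ i : Fin (hammingDist u v), hammingDist (seq i.castSucc) (seq i.succ) = 1)
    (t : Fin (hammingDist u v + 1)) {j : Fin n} (hj : u j = v j) : seq t j = u j :=
  coord_of_dist_add (x := u) (z := seq t) (y := v) (seq_dist_add h0 hl hstep t) hj

/-- If a coordinate differs at the endpoints, some step flips it away from `u`'s value. -/
lemma seq_exists_flip (h0 : seq 0 = u) (hl : seq (Fin.last (hammingDist u v)) = v)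
    (hstep : ∀ i : Fin (hammingDist u v), hammingDist (seq i.castSucc) (seq i.succ) = 1)
    {i : Fin n} (hne : u i ≠ v i) :
    ∃ t : Fin (hammingDist u v), seq t.castSucc i = u i ∧ seq t.succ i ≠ u i := by
  obtain ⟨t, ht1, ht2⟩ := walk_flip hstep (by rw [h0, hl]; exact hne)
  rw [h0] at ht1 ht2
  exact ⟨t, ht1, ht2⟩

/-- A step of Hamming distance 1 that changes coordinate `i` changes only coordinate `i`. -/
lemma eq_of_dist_one {x y : Fin n → Bool} {i : Fin n} (h1 : hammingDist x y = 1)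
    (hi : x i ≠ y i) {j : Fin n} (hj : j ≠ i) : x j = y j := by
  classical
  rw [hamming_card] at h1
  obtain ⟨a, ha⟩ := Finset.card_eq_one.mp h1
  have hia : i ∈ (Finset.univ.filter fun k => x k ≠ y k) := by
    simp only [Finset.mem_filter, Finset.mem_univ, true_and]; exact hi
  rw [ha, Finset.mem_singleton] at hia
  by_contra hc
  have hja : j ∈ (Finset.univ.filter fun k => x k ≠ y k) := by
    simp only [Finset.mem_filter, Finset.mem_univ, true_and]; exact hc
  rw [ha, Finset.mem_singleton] at hja
  exact hj (hja.trans hia.symm)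

end path



variable {n : ℕ}

section keylemma

variable {n : ℕ}

/-- The coordinatewise meet (via `decide`) of a nonempty finite subset of an
intersection-closed class lies in the class. -/
lemma decide_inf_mem {C : Set (Fin n → Bool)} (hic : IntersectionClosed C) :
    ∀ (S : Finset (Fin n → Bool)), S.Nonempty → ↑S ⊆ C →
      (fun j => decide (∀ z ∈ S, z j = true)) ∈ C := by
  classical
  intro S
  induction S using Finset.induction_on with
  | empty => intro h; exact absurd rfl h.ne_empty
  | @insert a S ha ih =>
    intro _ hsub
    have haC : a ∈ C := hsub (Finset.mem_insert_self a S)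
    by_cases hS : S.Nonempty
    · have hmem := ih hS (fun z hz => hsub (Finset.mem_insert_of_mem hz))
      have heq : (fun j => decide (∀ z ∈ insert a S, z j = true))
          = interV a (fun j => decide (∀ z ∈ S, z j = true)) := by
        funext j
        simp [Finset.forall_mem_insert, interV]
      rw [heq]
      exact hic a haC _ hmem
    · have hSe : S = ∅ := Finset.not_nonempty_iff_eq_empty.mp hS
      subst hSe
      have heq : (fun j => decide (∀ z ∈ insert a (∅ : Finset (Fin n → Bool)), z j = true)) = a := by
        funext j
        simp
      rw [heq]
      exact haC

/-- Key lemma: the cube on colour set `I` anchored at the minimum `m` of the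
top fiber lies in `C`. -/
lemma key_lemma : ∀ (k : ℕ) (C : Set (Fin n → Bool)), SPClosed C → IntersectionClosed C →
    ∀ I : Finset (Fin n), I.card = k → Shatters C I →
    ∀ m : Fin n → Bool, m ∈ C → (∀ j ∈ I, m j = true) →
      (∀ z ∈ C, (∀ j ∈ I, z j = true) → ∀ j, m j = true → z j = true) →
    ∀ b : Fin n → Bool, (fun j => if j ∈ I then b j else m j) ∈ C := by
  intro k
  induction k with
  | zero =>
    intro C _ _ I hcard _ m hm _ _ b
    have hI : I = ∅ := Finset.card_eq_zero.mp hcard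
    subst hI
    have : (fun j => if j ∈ (∅ : Finset (Fin n)) then b j else m j) = m := by
      funext j; simp
    rw [this]; exact hm
  | succ k ih =>
    intro C hsp hic I hcard hshat m hm hmI hmin b
    -- the recursive step for any i ∈ I
    have hrec : ∀ i ∈ I, (fun j => if j ∈ I.erase i then b j else m j) ∈ C := by
      intro i hiI
      set D : Set (Fin n → Bool) := {z | z ∈ C ∧ z i = true} with hD
      have hmD : m ∈ D := ⟨hm, hmI i hiI⟩
      have hicD : IntersectionClosed D := by
        intro x hx y hy
        exact ⟨hic x hx.1 y hy.1, by simp [interV, hx.2, hy.2]⟩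
      have hspD : SPClosed D := by
        intro x hx y hy
        obtain ⟨seq, h0, hl, hmem, hstep⟩ := hsp x hx.1 y hy.1
        refine ⟨seq, h0, hl, fun t => ⟨hmem t, ?_⟩, hstep⟩
        have := seq_coord_const h0 hl hstep t (j := i) (hx.2.trans hy.2.symm)
        rw [this, hx.2]
      have hshD : Shatters D (I.erase i) := by
        rw [Shatters, Set.eq_univ_iff_forall]
        intro y
        have hB := Set.eq_univ_iff_forall.mp hshat
          (fun j => if hji : j.1 = i then true
            else y ⟨j.1, Finset.mem_erase.mpr ⟨hji, j.2⟩⟩)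
        obtain ⟨z, hz, hpz⟩ := hB
        have hzi : z i = true := by
          have := congrFun hpz ⟨i, hiI⟩
          simpa [proj] using this
        refine ⟨z, ⟨hz, hzi⟩, ?_⟩
        funext j
        have hji : j.1 ≠ i := (Finset.mem_erase.mp j.2).1
        have h2 := congrFun hpz ⟨j.1, Finset.mem_of_mem_erase j.2⟩
        simp only [proj] at h2 ⊢
        rw [dif_neg hji] at h2
        exact h2.trans (congrArg y (Subtype.ext rfl))
      have hcardD : (I.erase i).card = k := by
        rw [Finset.card_erase_of_mem hiI, hcard]
        omega
      have hmImD : ∀ j ∈ I.erase i, m j = true :=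
        fun j hj => hmI j (Finset.mem_of_mem_erase hj)
      have hminD : ∀ z ∈ D, (∀ j ∈ I.erase i, z j = true) → ∀ j, m j = true → z j = true := by
        intro z hz hze
        refine hmin z hz.1 ?_
        intro j hj
        by_cases hji : j = i
        · rw [hji]; exact hz.2
        · exact hze j (Finset.mem_erase.mpr ⟨hji, hj⟩)
      exact (ih D hspD hicD (I.erase i) hcardD hshD m hmD hmImD hminD b).1
    by_cases hb : ∃ i ∈ I, b i = true
    · obtain ⟨i, hiI, hbi⟩ := hb
      have h1 := hrec i hiI
      have heq : (fun j => if j ∈ I then b j else m j)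
          = (fun j => if j ∈ I.erase i then b j else m j) := by
        funext j
        by_cases hj : j ∈ I
        · by_cases hji : j = i
          · subst hji
            simp [hj, Finset.notMem_erase, hbi, hmI j hj]
          · simp [hj, Finset.mem_erase.mpr ⟨hji, hj⟩]
        · simp [hj, fun h => hj (Finset.mem_of_mem_erase h)]
      rw [heq]; exact h1
    · push_neg at hb
      have hbf : ∀ i ∈ I, b i = false := fun i hi => Bool.not_eq_true _ ▸ by
        simpa using hb i hi
      by_cases hk : 1 ≤ k
      · -- |I| ≥ 2 : intersect two recursive vertices
        have h2 : 1 < I.card := by omega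
        obtain ⟨i, hiI, i', hi'I, hii⟩ := Finset.one_lt_card.mp h2
        have h1 := hrec i hiI
        have h1' := hrec i' hi'I
        have heq : (fun j => if j ∈ I then b j else m j)
            = interV (fun j => if j ∈ I.erase i then b j else m j)
                (fun j => if j ∈ I.erase i' then b j else m j) := by
          funext j
          simp only [interV]
          by_cases hj : j ∈ I
          · by_cases hji : j = i
            · subst hji
              simp [hj, Finset.notMem_erase, Finset.mem_erase.mpr ⟨hii, hj⟩,
                hmI j hj, hbf j hj]
            · by_cases hji' : j = i'
              · subst hji'
                simp [hj, Finset.notMem_erase, Finset.mem_erase.mpr ⟨hji, hj⟩,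
                  hmI j hj, hbf j hj]
              · simp [hj, Finset.mem_erase.mpr ⟨hji, hj⟩, Finset.mem_erase.mpr ⟨hji', hj⟩,
                  Bool.and_self]
          · simp [hj, fun h => hj (Finset.mem_of_mem_erase h),
              fun h => hj (Finset.mem_of_mem_erase h), Bool.and_self]
        rw [heq]
        exact hic _ h1 _ h1'
      · -- |I| = 1 : the shortest-path argument
        have hk0 : k = 0 := by omega
        have hcard1 : I.card = 1 := by omega
        obtain ⟨i, hI⟩ := Finset.card_eq_one.mp hcard1
        subst hI
        have hiI : i ∈ ({i} : Finset (Fin n)) := Finset.mem_singleton_self i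
        have hbi : b i = false := hbf i hiI
        have hmi : m i = true := hmI i hiI
        -- get w₀ ∈ C with w₀ i = false
        obtain ⟨w₀, hw₀, hpw₀⟩ := Set.eq_univ_iff_forall.mp hshat (fun _ => false)
        have hw₀i : w₀ i = false := congrFun hpw₀ ⟨i, hiI⟩
        set w : Fin n → Bool := interV m w₀ with hwdef
        have hwC : w ∈ C := hic m hm w₀ hw₀
        have hwi : w i = false := by simp [hwdef, interV, hw₀i]
        have hne : m i ≠ w i := by rw [hmi, hwi]; exact Bool.noConfusion
        obtain ⟨seq, h0, hl, hmem, hstep⟩ := hsp m hm w hwC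
        obtain ⟨t, ht1, ht2⟩ := seq_exists_flip h0 hl hstep hne
        set z : Fin n → Bool := seq t.castSucc with hz
        set y : Fin n → Bool := seq t.succ with hy
        have hzC : z ∈ C := hmem t.castSucc
        have hyC : y ∈ C := hmem t.succ
        have hzi : z i = true := by rw [ht1, hmi]
        have hyi : y i = false := by
          rw [hmi] at ht2
          exact Bool.not_eq_true _ ▸ (by simpa using ht2)
        have hd1 : hammingDist z y = 1 := hstep t
        have hziyi : z i ≠ y i := by rw [hzi, hyi]; exact Bool.noConfusion
        -- z = m
        have hzm : z = m := by
          funext j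
          by_cases hmw : m j = w j
          · exact seq_coord_const h0 hl hstep t.castSucc hmw
          · have hmj : m j = true := by
              by_contra hmj
              have hmj' : m j = false := Bool.not_eq_true _ ▸ (by simpa using hmj)
              apply hmw
              rw [hmj', hwdef]
              simp [interV, hmj']
            have : z j = true := hmin z hzC (fun j' hj' => by
              rw [Finset.mem_singleton.mp hj']; exact hzi) j hmj
            rw [this, hmj]
        have hfin : (fun j => if j ∈ ({i} : Finset (Fin n)) then b j else m j) = y := by
          funext j
          by_cases hji : j = i
          · subst hji
            simp [hbi, hyi]
          · have h3 : z j = y j := eq_of_dist_one hd1 hziyi hji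
            simp only [Finset.mem_singleton, hji, ite_false]
            rw [← hzm]
            exact h3
        rw [hfin]
        exact hyC

end keylemma

/-- A nonempty shortest-path closed and intersection-closed class is
extremal. -/
theorem extremal_of_spClosed_intersectionClosed (C : Set (Fin n → Bool))
    (hne : C.Nonempty) (hsp : SPClosed C) (hic : IntersectionClosed C) :
    Extremal C := by
  classical
  intro I hshat
  -- the top fiber
  set F : Set (Fin n → Bool) := {z | z ∈ C ∧ ∀ j ∈ I, z j = true} with hF
  have hFfin : F.Finite := Set.toFinite F
  set S : Finset (Fin n → Bool) := hFfin.toFinset with hS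
  have hmemS : ∀ z, z ∈ S ↔ (z ∈ C ∧ ∀ j ∈ I, z j = true) := by
    intro z
    rw [hS, Set.Finite.mem_toFinset]
    exact Iff.rfl
  have hSne : S.Nonempty := by
    obtain ⟨z, hz, hpz⟩ := Set.eq_univ_iff_forall.mp hshat (fun _ => true)
    exact ⟨z, (hmemS z).mpr ⟨hz, fun j hj => congrFun hpz ⟨j, hj⟩⟩⟩
  set m : Fin n → Bool := fun j => decide (∀ z ∈ S, z j = true) with hmdef
  have hmC : m ∈ C := by
    rw [hmdef]
    exact decide_inf_mem hic S hSne (fun z hz => ((hmemS z).mp hz).1)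
  have hmI : ∀ j ∈ I, m j = true := by
    intro j hj
    rw [hmdef]
    simp only [decide_eq_true_eq]
    intro z hz
    exact ((hmemS z).mp hz).2 j hj
  have hmin : ∀ z ∈ C, (∀ j ∈ I, z j = true) → ∀ j, m j = true → z j = true := by
    intro z hz hzt j hmj
    rw [hmdef] at hmj
    simp only [decide_eq_true_eq] at hmj
    exact hmj z ((hmemS z).mpr ⟨hz, hzt⟩)
  refine ⟨{v | ∀ j, j ∉ I → v j = m j}, ⟨m, rfl⟩, ?_⟩
  intro v hv
  have hveq : v = fun j => if j ∈ I then v j else m j := by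
    funext j
    by_cases hj : j ∈ I
    · simp [hj]
    · simp [hj, hv j hj]
  rw [hveq]
  exact key_lemma I.card C hsp hic I rfl hshat m hmC hmI hmin v
end

section
/- If a concept class C ⊆ {0,1}^n is shortest-path closed, then its intersection closure C̄ is also shortest-path closed. -/
variable {n : ℕ}

/- ### auxiliary lemmas -/

lemma SP_plus_two {a b c : Fin n → Bool} {k : Fin n} (hac : a k = c k) (hab : a k ≠ b k) :
    hammingDist a c + 2 ≤ hammingDist a b + hammingDist b c := by
  classical
  have hbc : b k ≠ c k := fun h => hab (hac ▸ h.symm ▸ rfl)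
  have hsub : (Finset.univ.filter fun i => a i ≠ c i) ∪ {k}
      ⊆ (Finset.univ.filter fun i => a i ≠ b i) ∪ (Finset.univ.filter fun i => b i ≠ c i) := by
    intro i hi
    simp only [Finset.mem_union, Finset.mem_filter, Finset.mem_univ, true_and,
      Finset.mem_singleton] at hi ⊢
    rcases hi with hi | rfl
    · by_contra h
      push_neg at h
      exact hi (h.1.symm ▸ h.2.symm ▸ rfl)
    · exact Or.inl hab
  have hk : k ∈ (Finset.univ.filter fun i => a i ≠ b i) ∩ (Finset.univ.filter fun i => b i ≠ c i) := by
    simp [hab, hbc]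
  have h1 : ((Finset.univ.filter fun i => a i ≠ c i) ∪ {k}).card
      ≤ ((Finset.univ.filter fun i => a i ≠ b i) ∪ (Finset.univ.filter fun i => b i ≠ c i)).card :=
    Finset.card_le_card hsub
  have h2 : ((Finset.univ.filter fun i => a i ≠ c i) ∪ {k}).card
      = (Finset.univ.filter fun i => a i ≠ c i).card + 1 := by
    rw [Finset.union_comm, ← Finset.insert_eq]
    exact Finset.card_insert_of_notMem (by simp [hac])
  have h3 := Finset.card_union_add_card_inter (Finset.univ.filter fun i => a i ≠ b i)
      (Finset.univ.filter fun i => b i ≠ c i)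
  have h4 : 1 ≤ ((Finset.univ.filter fun i => a i ≠ b i) ∩ (Finset.univ.filter fun i => b i ≠ c i)).card :=
    Finset.card_pos.mpr ⟨k, hk⟩
  show (Finset.univ.filter fun i => a i ≠ c i).card + 2
      ≤ (Finset.univ.filter fun i => a i ≠ b i).card + (Finset.univ.filter fun i => b i ≠ c i).card
  omega

lemma SP_two_diff {x y : Fin n → Bool} {k k' : Fin n} (hkk : k ≠ k')
    (h1 : x k ≠ y k) (h2 : x k' ≠ y k') : 2 ≤ hammingDist x y := by
  classical
  have hsub : ({k, k'} : Finset (Fin n)) ⊆ Finset.univ.filter fun i => x i ≠ y i := by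
    intro i hi
    simp only [Finset.mem_insert, Finset.mem_singleton] at hi
    rcases hi with rfl | rfl <;> simp [h1, h2]
  calc 2 = ({k, k'} : Finset (Fin n)).card := (Finset.card_pair hkk).symm
    _ ≤ (Finset.univ.filter fun i => x i ≠ y i).card := Finset.card_le_card hsub

section Path

variable {d : ℕ} {seq : Fin (d + 1) → Fin n → Bool}
  (hstep : ∀ (m : ℕ) (hm : m < d),
    hammingDist (seq ⟨m, Nat.lt_succ_of_lt hm⟩) (seq ⟨m + 1, Nat.succ_lt_succ hm⟩) = 1)

include hstep

lemma SP_dist_le : ∀ (b a : ℕ), a ≤ b → ∀ (ha : a < d + 1) (hb : b < d + 1),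
    hammingDist (seq ⟨a, ha⟩) (seq ⟨b, hb⟩) ≤ b - a := by
  intro b
  induction b with
  | zero =>
    intro a hab ha hb
    have : a = 0 := by omega
    subst this
    simp
  | succ m ih =>
    intro a hab ha hb
    rcases Nat.lt_or_ge a (m + 1) with h | h
    · have hm : m < d := by omega
      calc hammingDist (seq ⟨a, ha⟩) (seq ⟨m + 1, hb⟩)
          ≤ hammingDist (seq ⟨a, ha⟩) (seq ⟨m, by omega⟩)
            + hammingDist (seq ⟨m, by omega⟩) (seq ⟨m + 1, hb⟩) := hammingDist_triangle _ _ _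
        _ ≤ (m - a) + 1 := add_le_add (ih a (by omega) ha (by omega))
            (le_of_eq (hstep m hm))
        _ ≤ m + 1 - a := by omega
    · have : a = m + 1 := by omega
      subst this
      simp

variable (hfull : hammingDist (seq ⟨0, Nat.succ_pos d⟩) (seq ⟨d, Nat.lt_succ_self d⟩) = d)

include hfull

lemma SP_dist_eq (a b : ℕ) (hab : a ≤ b) (ha : a < d + 1) (hb : b < d + 1) :
    hammingDist (seq ⟨a, ha⟩) (seq ⟨b, hb⟩) = b - a := by
  have h1 := SP_dist_le hstep a 0 (by omega) (Nat.succ_pos d) ha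
  have h2 := SP_dist_le hstep b a hab ha hb
  have h3 := SP_dist_le hstep d b (by omega) hb (Nat.lt_succ_self d)
  have t1 := hammingDist_triangle (seq ⟨0, Nat.succ_pos d⟩) (seq ⟨a, ha⟩)
      (seq ⟨d, Nat.lt_succ_self d⟩)
  have t2 := hammingDist_triangle (seq ⟨a, ha⟩) (seq ⟨b, hb⟩) (seq ⟨d, Nat.lt_succ_self d⟩)
  omega

lemma SP_mono {a b c : ℕ} (hab : a ≤ b) (hbc : b ≤ c) (hc : c < d + 1) (k : Fin n)
    (h : seq ⟨a, by omega⟩ k = seq ⟨c, hc⟩ k) :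
    seq ⟨b, by omega⟩ k = seq ⟨a, by omega⟩ k := by
  by_contra hne
  have key := SP_plus_two (b := seq ⟨b, by omega⟩) h (fun hh => hne hh.symm)
  rw [SP_dist_eq hstep hfull a c (by omega) (by omega) hc,
    SP_dist_eq hstep hfull a b hab (by omega) (by omega),
    SP_dist_eq hstep hfull b c hbc (by omega) hc] at key
  omega

end Path
lemma SP_find_x {D : ℕ} {seq : Fin (D + 1) → Fin n → Bool} {t s u : Fin n → Bool} {j : Fin n}
    (hp0 : seq 0 = t) (hplast : seq (Fin.last D) = s)
    (hpstep : ∀ i : Fin D, hammingDist (seq i.castSucc) (seq i.succ) = 1)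
    (hD : hammingDist t s = D)
    (hus : ∀ k, u k = true → s k = true)
    (hju : u j = true) (htj : t j = false) :
    ∃ (p : Fin (D + 1)) (js : Fin n), u js = true ∧ t js = false ∧ seq p js = false ∧
      ∀ k, u k = true → k ≠ js → seq p k = true := by
  classical
  have hstep : ∀ (m : ℕ) (hm : m < D),
      hammingDist (seq ⟨m, Nat.lt_succ_of_lt hm⟩) (seq ⟨m + 1, Nat.succ_lt_succ hm⟩) = 1 := by
    intro m hm
    have := hpstep ⟨m, hm⟩
    rwa [Fin.castSucc_mk, Fin.succ_mk] at this
  have hseq0 : seq ⟨0, Nat.succ_pos D⟩ = t := by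
    rw [← hp0]
    congr 1
  have hseqd : seq ⟨D, Nat.lt_succ_self D⟩ = s := hplast
  have hfull : hammingDist (seq ⟨0, Nat.succ_pos D⟩) (seq ⟨D, Nat.lt_succ_self D⟩) = D := by
    rw [hseq0, hseqd, hD]
  have hsk : ∀ k, u k = true → seq ⟨D, Nat.lt_succ_self D⟩ k = true := by
    intro k hk; rw [hseqd]; exact hus k hk
  have hFne : ∀ k, u k = true →
      (Finset.univ.filter fun r : Fin (D + 1) => seq r k = true).Nonempty := by
    intro k hk
    exact ⟨⟨D, Nat.lt_succ_self D⟩, by simp [hsk k hk]⟩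
  set F : Fin n → Fin (D + 1) := fun k =>
    if hne : (Finset.univ.filter fun r : Fin (D + 1) => seq r k = true).Nonempty then
      (Finset.univ.filter fun r : Fin (D + 1) => seq r k = true).min' hne
    else ⟨0, Nat.succ_pos D⟩ with hF
  have hFmem : ∀ k, u k = true → seq (F k) k = true := by
    intro k hk
    have hmm := Finset.min'_mem _ (hFne k hk)
    rw [hF]; simp only [dif_pos (hFne k hk)]
    exact (Finset.mem_filter.mp hmm).2
  have hFmin : ∀ k (r : Fin (D + 1)), seq r k = true → F k ≤ r := by
    intro k r hr
    have hne : (Finset.univ.filter fun r : Fin (D + 1) => seq r k = true).Nonempty :=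
      ⟨r, by simp [hr]⟩
    rw [hF]; simp only [dif_pos hne]
    exact Finset.min'_le _ _ (by simp [hr])
  have hFbelow : ∀ k, u k = true → ∀ r : Fin (D + 1), r < F k → seq r k = false := by
    intro k hk r hr
    cases hrk : seq r k with
    | false => rfl
    | true => exact absurd (hFmin k r hrk) (not_le.mpr hr)
  have hFabove : ∀ k, u k = true → ∀ r : Fin (D + 1), F k ≤ r → seq r k = true := by
    intro k hk r hr
    have h1 : seq ⟨(F k).1, by omega⟩ k = seq ⟨D, Nat.lt_succ_self D⟩ k := by
      rw [hsk k hk, Fin.eta]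
      exact hFmem k hk
    have h2 := SP_mono hstep hfull (a := (F k).1) (b := r.1) (c := D)
      hr (by omega) (Nat.lt_succ_self D) k h1
    rw [Fin.eta, Fin.eta] at h2
    rw [h2]
    exact hFmem k hk
  have hF1 : ∀ k, u k = true → t k = false → 0 < (F k).1 := by
    intro k hk htk
    rcases Nat.eq_zero_or_pos (F k).1 with h0 | h0
    · have hh : seq (F k) k = true := hFmem k hk
      have he : F k = ⟨0, Nat.succ_pos D⟩ := Fin.ext h0
      rw [he, hseq0, htk] at hh
      exact absurd hh (by simp)
    · exact h0
  have hFinj : ∀ k k', u k = true → t k = false → u k' = true → t k' = false →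
      k ≠ k' → F k ≠ F k' := by
    intro k k' hk htk hk' htk' hkk he
    have h1 : 0 < (F k).1 := hF1 k hk htk
    have hlt : (F k).1 - 1 < D := by have := (F k).2; omega
    have hd1 := hstep ((F k).1 - 1) hlt
    have hm1 : ((⟨(F k).1 - 1, Nat.lt_succ_of_lt hlt⟩ : Fin (D + 1))) < F k := by
      rw [Fin.lt_def]; show (F k).1 - 1 < (F k).1; omega
    have hm2 : F k ≤ ⟨(F k).1 - 1 + 1, Nat.succ_lt_succ hlt⟩ := by
      rw [Fin.le_def]; simp; omega
    have hk1 : seq ⟨(F k).1 - 1, Nat.lt_succ_of_lt hlt⟩ k = false := hFbelow k hk _ hm1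
    have hk2 : seq ⟨(F k).1 - 1 + 1, Nat.succ_lt_succ hlt⟩ k = true := hFabove k hk _ hm2
    have hk1' : seq ⟨(F k).1 - 1, Nat.lt_succ_of_lt hlt⟩ k' = false := by
      refine hFbelow k' hk' _ ?_
      rw [← he]; exact hm1
    have hk2' : seq ⟨(F k).1 - 1 + 1, Nat.succ_lt_succ hlt⟩ k' = true := by
      refine hFabove k' hk' _ ?_
      rw [← he]; exact hm2
    have hne1 : seq ⟨(F k).1 - 1, Nat.lt_succ_of_lt hlt⟩ k
        ≠ seq ⟨(F k).1 - 1 + 1, Nat.succ_lt_succ hlt⟩ k := by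
      rw [hk1, hk2]; simp
    have hne2 : seq ⟨(F k).1 - 1, Nat.lt_succ_of_lt hlt⟩ k'
        ≠ seq ⟨(F k).1 - 1 + 1, Nat.succ_lt_succ hlt⟩ k' := by
      rw [hk1', hk2']; simp
    have h2d := SP_two_diff hkk hne1 hne2
    omega
  have hJne : (Finset.univ.filter fun k => u k = true ∧ t k = false).Nonempty :=
    ⟨j, by simp [hju, htj]⟩
  obtain ⟨js, hjsJ, hjsmax⟩ := Finset.exists_max_image
    (Finset.univ.filter fun k => u k = true ∧ t k = false) (fun k => (F k).1) hJne
  rw [Finset.mem_filter] at hjsJ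
  obtain ⟨-, hjsu, hjst⟩ := hjsJ
  have hjsF : 0 < (F js).1 := hF1 js hjsu hjst
  have hplt : (F js).1 - 1 < D + 1 := by have := (F js).2; omega
  refine ⟨⟨(F js).1 - 1, hplt⟩, js, hjsu, hjst, ?_, ?_⟩
  · refine hFbelow js hjsu _ ?_
    rw [Fin.lt_def]; show (F js).1 - 1 < (F js).1; omega
  · intro k hk hkjs
    cases htk : t k with
    | true =>
      have h1 : seq ⟨0, Nat.succ_pos D⟩ k = seq ⟨D, Nat.lt_succ_self D⟩ k := by
        rw [hseq0, hsk k hk, htk]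
      have h2 := SP_mono hstep hfull (a := 0) (b := (F js).1 - 1) (c := D)
        (Nat.zero_le _) (by omega) (Nat.lt_succ_self D) k h1
      rw [h2, hseq0, htk]
    | false =>
      have hmemJ : k ∈ Finset.univ.filter fun k => u k = true ∧ t k = false := by
        simp [hk, htk]
      have hle : (F k).1 ≤ (F js).1 := hjsmax k hmemJ
      have hne : F k ≠ F js := hFinj k js hk htk hjsu hjst hkjs
      have hlt : (F k).1 < (F js).1 := by
        rcases lt_or_eq_of_le hle with h | h
        · exact h
        · exact absurd (Fin.ext h) hne
      refine hFabove k hk _ ?_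
      rw [Fin.le_def]; simp; omega

lemma SP_step (C : Set (Fin n → Bool)) (hsp : SPClosed C) {u v : Fin n → Bool}
    (hu : u ∈ interClosure C) (hv : v ∈ interClosure C)
    (j : Fin n) (hju : u j = true) (hjv : v j = false) :
    ∃ j' : Fin n, u j' = true ∧ v j' = false ∧
      (fun k => if k = j' then false else u k) ∈ interClosure C := by
  classical
  obtain ⟨S, hSne, hSC, hSu⟩ := hu
  obtain ⟨T, hTne, hTC, hTv⟩ := hv
  obtain ⟨s, hs⟩ := hSne
  have hus : ∀ k, u k = true → ∀ s' ∈ S, s' k = true := by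
    intro k hk s' hs'
    have hk' : S.inf (fun w => w k) = true := by rw [hSu] at hk; exact hk
    exact (Finset.inf_eq_top_iff _ S).mp hk' s' hs'
  have hvt : ∀ k, v k = true → ∀ t' ∈ T, t' k = true := by
    intro k hk t' ht'
    have hk' : T.inf (fun w => w k) = true := by rw [hTv] at hk; exact hk
    exact (Finset.inf_eq_top_iff _ T).mp hk' t' ht'
  have hvfalse : ∀ k, (∃ t' ∈ T, t' k = false) → v k = false := by
    intro k ⟨t', ht', htk⟩
    cases hvk : v k with
    | false => rfl
    | true => rw [hvt k hvk t' ht'] at htk; exact absurd htk (by simp)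
  have hTj : ∃ t ∈ T, t j = false := by
    by_contra hcon
    push_neg at hcon
    have hall : T.inf (fun w => w j) = true :=
      (Finset.inf_eq_top_iff _ T).mpr fun t' ht' => by
        cases htj : t' j with
        | false => exact absurd htj (hcon t' ht')
        | true => rfl
    have hvj' : T.inf (fun w => w j) = false := by rw [hTv] at hjv; exact hjv
    rw [hall] at hvj'
    exact absurd hvj' (by simp)
  obtain ⟨t, ht, htj⟩ := hTj
  obtain ⟨seq, hp0, hplast, hpmem, hpstep⟩ := hsp t (hTC ht) s (hSC hs)
  obtain ⟨p, js, hjsu, hjst, hxjs, hxother⟩ :=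
    SP_find_x hp0 hplast hpstep rfl (fun k hk => hus k hk s hs) hju htj
  set x : Fin n → Bool := seq p with hxdef
  have hxC : x ∈ C := hpmem p
  refine ⟨js, hjsu, hvfalse js ⟨t, ht, hjst⟩,
    insert x S, ⟨x, Finset.mem_insert_self x S⟩, ?_, ?_⟩
  · rw [Finset.coe_insert]
    exact Set.insert_subset hxC hSC
  · funext k
    show (if k = js then false else u k) = (insert x S).inf fun w => w k
    rw [Finset.inf_insert]
    have hSk : S.inf (fun w => w k) = u k := by rw [hSu]
    rw [hSk]
    by_cases hkjs : k = js
    · subst hkjs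
      rw [if_pos rfl, hxjs]
      rfl
    · rw [if_neg hkjs]
      cases hk : u k with
      | false => simp
      | true => rw [hxother k hk hkjs]; rfl

lemma SP_flip_dist {u v : Fin n → Bool} {j : Fin n} (hju : u j = true) (hjv : v j = false) :
    hammingDist u (fun k => if k = j then false else u k) = 1 ∧
      hammingDist (fun k => if k = j then false else u k) v + 1 = hammingDist u v := by
  classical
  constructor
  · show (Finset.univ.filter fun i => u i ≠ (if i = j then false else u i)).card = 1
    have he : (Finset.univ.filter fun i => u i ≠ (if i = j then false else u i)) = {j} := by
      ext i
      simp only [Finset.mem_filter, Finset.mem_univ, true_and, Finset.mem_singleton]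
      constructor
      · intro hi
        by_contra hij
        exact hi (by simp [hij])
      · intro hij
        subst hij
        simp [hju]
    rw [he, Finset.card_singleton]
  · have hjmem : j ∈ Finset.univ.filter fun i => u i ≠ v i := by
      simp [hju, hjv]
    have hset : (Finset.univ.filter fun i => (if i = j then false else u i) ≠ v i)
        = (Finset.univ.filter fun i => u i ≠ v i).erase j := by
      ext i
      simp only [Finset.mem_filter, Finset.mem_univ, true_and, Finset.mem_erase]
      constructor
      · intro hi
        by_cases hij : i = j
        · subst hij
          simp [hjv] at hi
        · exact ⟨hij, by simpa [hij] using hi⟩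
      · intro ⟨hij, hi⟩
        simpa [hij] using hi
    show (Finset.univ.filter fun i => (if i = j then false else u i) ≠ v i).card + 1
        = (Finset.univ.filter fun i => u i ≠ v i).card
    rw [hset, Finset.card_erase_of_mem hjmem]
    have hpos : 0 < (Finset.univ.filter fun i => u i ≠ v i).card := Finset.card_pos.mpr ⟨j, hjmem⟩
    omega

lemma SP_prepend {A : Set (Fin n → Bool)} {u z v : Fin n → Bool}
    (hu : u ∈ A) (h1 : hammingDist u z = 1) (h2 : hammingDist z v + 1 = hammingDist u v)
    (hp : ∃ seq, IsShortestPath A z v seq) : ∃ seq, IsShortestPath A u v seq := by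
  obtain ⟨seq', hs0, hslast, hsmem, hsstep⟩ := hp
  have hlen : ∀ i : Fin (hammingDist u v + 1), ¬ i.1 = 0 → i.1 - 1 < hammingDist z v + 1 := by
    intro i hi
    have := i.2
    omega
  refine ⟨fun i => if hi : i.1 = 0 then u else seq' ⟨i.1 - 1, hlen i hi⟩, ?_, ?_, ?_, ?_⟩
  · beta_reduce
    rw [dif_pos (by simp)]
  · beta_reduce
    have hl : ¬ (Fin.last (hammingDist u v)).1 = 0 := by
      rw [Fin.val_last]
      omega
    rw [dif_neg hl]
    have he : (⟨(Fin.last (hammingDist u v)).1 - 1, hlen _ hl⟩ : Fin (hammingDist z v + 1))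
        = Fin.last (hammingDist z v) := by
      apply Fin.ext
      simp [Fin.last]
      omega
    rw [he, hslast]
  · intro i
    beta_reduce
    by_cases hi : i.1 = 0
    · rw [dif_pos hi]; exact hu
    · rw [dif_neg hi]; exact hsmem _
  · intro i
    beta_reduce
    have hcs : (i.castSucc).1 = i.1 := rfl
    have hsc : (i.succ).1 = i.1 + 1 := rfl
    by_cases hi : i.1 = 0
    · have h0 : (i.castSucc).1 = 0 := by rw [hcs, hi]
      have hns : ¬ (i.succ).1 = 0 := by rw [hsc]; omega
      rw [dif_pos h0, dif_neg hns]
      have he : (⟨(i.succ).1 - 1, hlen _ hns⟩ : Fin (hammingDist z v + 1)) = 0 := by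
        apply Fin.ext
        simp [hsc, hi]
      rw [he, hs0]
      exact h1
    · have hns : ¬ (i.castSucc).1 = 0 := by rw [hcs]; exact hi
      have hns' : ¬ (i.succ).1 = 0 := by rw [hsc]; omega
      rw [dif_neg hns, dif_neg hns']
      have hidx : i.1 - 1 < hammingDist z v := by
        have := i.2
        omega
      have hkey := hsstep ⟨i.1 - 1, hidx⟩
      have e1 : (⟨i.1 - 1, hidx⟩ : Fin (hammingDist z v)).castSucc
          = ⟨(i.castSucc).1 - 1, hlen _ hns⟩ := by
        apply Fin.ext
        simp [hcs]
      have e2 : (⟨i.1 - 1, hidx⟩ : Fin (hammingDist z v)).succ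
          = ⟨(i.succ).1 - 1, hlen _ hns'⟩ := by
        apply Fin.ext
        simp [hsc]
        omega
      rw [e1, e2] at hkey
      exact hkey

lemma SP_append {A : Set (Fin n → Bool)} {u z v : Fin n → Bool}
    (hv : v ∈ A) (h1 : hammingDist z v = 1) (h2 : hammingDist u z + 1 = hammingDist u v)
    (hp : ∃ seq, IsShortestPath A u z seq) : ∃ seq, IsShortestPath A u v seq := by
  obtain ⟨seq', hs0, hslast, hsmem, hsstep⟩ := hp
  have hlen : ∀ i : Fin (hammingDist u v + 1), ¬ i.1 = hammingDist u v →
      i.1 < hammingDist u z + 1 := by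
    intro i hi
    have := i.2
    omega
  refine ⟨fun i => if hi : i.1 = hammingDist u v then v else seq' ⟨i.1, hlen i hi⟩, ?_, ?_, ?_, ?_⟩
  · beta_reduce
    have h0 : ¬ (0 : Fin (hammingDist u v + 1)).1 = hammingDist u v := by
      rw [Fin.val_zero]
      omega
    rw [dif_neg h0]
    have he : (⟨(0 : Fin (hammingDist u v + 1)).1, hlen _ h0⟩ : Fin (hammingDist u z + 1)) = 0 := by
      apply Fin.ext
      simp
    rw [he, hs0]
  · beta_reduce
    rw [dif_pos (by simp [Fin.last])]
  · intro i
    beta_reduce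
    by_cases hi : i.1 = hammingDist u v
    · rw [dif_pos hi]; exact hv
    · rw [dif_neg hi]; exact hsmem _
  · intro i
    beta_reduce
    have hcs : (i.castSucc).1 = i.1 := rfl
    have hsc : (i.succ).1 = i.1 + 1 := rfl
    have hnc : ¬ (i.castSucc).1 = hammingDist u v := by
      rw [hcs]
      have := i.2
      omega
    rw [dif_neg hnc]
    by_cases hi : (i.succ).1 = hammingDist u v
    · rw [dif_pos hi]
      have he : (⟨(i.castSucc).1, hlen _ hnc⟩ : Fin (hammingDist u z + 1))
          = Fin.last (hammingDist u z) := by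
        apply Fin.ext
        simp [hcs, Fin.last]
        rw [hsc] at hi
        omega
      rw [he, hslast]
      exact h1
    · rw [dif_neg hi]
      have hidx : i.1 < hammingDist u z := by
        rw [hsc] at hi
        have := i.2
        omega
      have hkey := hsstep ⟨i.1, hidx⟩
      have e1 : (⟨i.1, hidx⟩ : Fin (hammingDist u z)).castSucc
          = ⟨(i.castSucc).1, hlen _ hnc⟩ := by
        apply Fin.ext
        simp [hcs]
      have e2 : (⟨i.1, hidx⟩ : Fin (hammingDist u z)).succ
          = ⟨(i.succ).1, hlen _ hi⟩ := by
        apply Fin.ext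
        simp [hsc]
      rw [e1, e2] at hkey
      exact hkey

/-- If `C` is shortest-path closed then so is its intersection
closure. -/
theorem spClosed_interClosure (C : Set (Fin n → Bool)) (hsp : SPClosed C) :
    SPClosed (interClosure C) := by
  classical
  have key : ∀ (D : ℕ) (u v : Fin n → Bool), u ∈ interClosure C → v ∈ interClosure C →
      hammingDist u v = D → ∃ seq, IsShortestPath (interClosure C) u v seq := by
    intro D
    induction D with
    | zero =>
      intro u v hu hv hD
      have huv : u = v := eq_of_hammingDist_eq_zero hD
      refine ⟨fun _ => u, rfl, huv ▸ rfl, fun _ => hu, fun i => ?_⟩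
      exfalso
      have := i.2
      omega
    | succ D ih =>
      intro u v hu hv hD
      have hpos : 0 < hammingDist u v := by omega
      have hne : (Finset.univ.filter fun i => u i ≠ v i).Nonempty := by
        apply Finset.card_pos.mp
        show 0 < (Finset.univ.filter fun i => u i ≠ v i).card
        exact hpos
      obtain ⟨j, hj⟩ := hne
      have hj' : u j ≠ v j := (Finset.mem_filter.mp hj).2
      cases huj : u j with
      | true =>
        have hvj : v j = false := by
          cases hvj : v j with
          | false => rfl
          | true => rw [huj, hvj] at hj'; exact absurd rfl hj'
        obtain ⟨j', hj'u, hj'v, hzC⟩ := SP_step C hsp hu hv j huj hvj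
        obtain ⟨h1, h2⟩ := SP_flip_dist hj'u hj'v
        exact SP_prepend hu h1 h2 (ih _ v hzC hv (by omega))
      | false =>
        have hvj : v j = true := by
          cases hvj : v j with
          | true => rfl
          | false => rw [huj, hvj] at hj'; exact absurd rfl hj'
        obtain ⟨j', hj'v, hj'u, hzC⟩ := SP_step C hsp hv hu j hvj huj
        obtain ⟨h1, h2⟩ := SP_flip_dist hj'v hj'u
        have h1' : hammingDist (fun k => if k = j' then false else v k) v = 1 := by
          rw [hammingDist_comm]; exact h1
        have h2' : hammingDist u (fun k => if k = j' then false else v k) + 1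
            = hammingDist u v := by
          rw [hammingDist_comm, hammingDist_comm u v]; exact h2
        exact SP_append hv h1' h2' (ih u _ hu hzC (by omega))
  intro u hu v hv
  exact key (hammingDist u v) u v hu hv rfl
end

section
/- If a concept class C ⊆ {0,1}^n is shortest-path closed, then for any u,v ∈ C there is a shortest path from u to v (a sequence from u to v of length equal to their Hamming distance, with consecutive vertices at Hamming distance 1) all of whose vertices lie in X = {a ⊙ b : a,b ∈ C} and which passes through the vertex u ⊙ v. -/
variable {n : ℕ}

/-- A path of length `m` from `a` to `b` inside `A`. -/
def myPathLen (A : Set (Fin n → Bool)) (a b : Fin n → Bool) (m : ℕ) : Prop :=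
  ∃ seq : Fin (m+1) → Fin n → Bool, seq 0 = a ∧ seq (Fin.last m) = b ∧
    (∀ i, seq i ∈ A) ∧ ∀ i : Fin m, hammingDist (seq i.castSucc) (seq i.succ) = 1

/-- A path of length `m` from `a` to `b` inside `A` passing through `w`. -/
def myPathThru (A : Set (Fin n → Bool)) (a w b : Fin n → Bool) (m : ℕ) : Prop :=
  ∃ k : ℕ, ∃ _hk : k ≤ m, ∃ seq : Fin (m+1) → Fin n → Bool, seq 0 = a ∧
    seq (Fin.last m) = b ∧ (∀ i, seq i ∈ A) ∧
    (∀ i : Fin m, hammingDist (seq i.castSucc) (seq i.succ) = 1) ∧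
    seq ⟨k, by omega⟩ = w

lemma dist_add_of (x y z : Fin n → Bool)
    (h : ∀ j, (x j ≠ z j ↔ (x j ≠ y j ∨ y j ≠ z j)) ∧ ¬(x j ≠ y j ∧ y j ≠ z j)) :
    hammingDist x z = hammingDist x y + hammingDist y z := by
  show (Finset.univ.filter fun i => x i ≠ z i).card = _
  rw [show (Finset.univ.filter fun i => x i ≠ z i)
      = (Finset.univ.filter fun i => x i ≠ y i) ∪ (Finset.univ.filter fun i => y i ≠ z i) by
    rw [← Finset.filter_or]; exact Finset.filter_congr fun j _ => by simpa using (h j).1]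
  rw [Finset.card_union_of_disjoint]
  · rfl
  · rw [Finset.disjoint_filter]
    intro j _ h1 h2
    exact (h j).2 ⟨h1, h2⟩

lemma dist_sandwich (x y z : Fin n → Bool) (h1 : ∀ j, y j = true → x j = true)
    (h2 : ∀ j, z j = true → y j = true) :
    hammingDist x z = hammingDist x y + hammingDist y z := by
  refine dist_add_of x y z fun j => ?_
  specialize h1 j; specialize h2 j
  cases hx : x j <;> cases hy : y j <;> cases hz : z j <;> simp_all

lemma dist_split (u v : Fin n → Bool) :
    hammingDist u (interV u v) + hammingDist (interV u v) v = hammingDist u v := by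
  refine (dist_add_of u (interV u v) v fun j => ?_).symm
  simp only [interV]
  cases hx : u j <;> cases hy : v j <;> simp_all

lemma flip_away (u x y : Fin n → Bool) (hxy : hammingDist x y = 1)
    (hd : hammingDist u y = hammingDist u x + 1) : ∀ j, x j ≠ y j → x j = u j := by
  by_contra hc
  push_neg at hc
  obtain ⟨j, hj1, hj2⟩ := hc
  have huniq : ∀ j', j' ≠ j → x j' = y j' := by
    intro j' hj'
    obtain ⟨a, ha⟩ := Finset.card_eq_one.1 (hxy :
      (Finset.univ.filter fun i => x i ≠ y i).card = 1)
    have hjmem : j ∈ (Finset.univ.filter fun i => x i ≠ y i) := by simp [hj1]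
    rw [ha] at hjmem
    simp at hjmem
    by_contra hne
    have : j' ∈ (Finset.univ.filter fun i => x i ≠ y i) := by simp [hne]
    rw [ha] at this
    simp at this
    exact hj' (this.trans hjmem.symm)
  have hsub : (Finset.univ.filter fun i => u i ≠ y i)
      ⊆ (Finset.univ.filter fun i => u i ≠ x i) := by
    intro j' hj'
    simp only [Finset.mem_filter, Finset.mem_univ, true_and] at hj' ⊢
    rcases eq_or_ne j' j with rfl | hne
    · intro hux
      apply hj'
      -- Bool: x j ≠ y j, x j ≠ u j so u j = y j
      cases hxv : x j' <;> cases hyv : y j' <;> cases huv : u j' <;> simp_all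
    · rw [huniq j' hne]; exact hj'
  have : hammingDist u y ≤ hammingDist u x := Finset.card_le_card hsub
  omega

lemma prepend {A : Set (Fin n → Bool)} {a x b : Fin n → Bool} {m : ℕ}
    (h : myPathLen A x b m) (hd : hammingDist a x = 1) (ha : a ∈ A) :
    myPathLen A a b (m+1) := by
  obtain ⟨seq, h0, hl, hm, hs⟩ := h
  refine ⟨Fin.cons a seq, Fin.cons_zero _ _, ?_, ?_, ?_⟩
  · rw [show Fin.last (m+1) = (Fin.last m).succ from Fin.ext (by simp), Fin.cons_succ]
    exact hl
  · intro i
    refine Fin.cases ?_ (fun j => ?_) i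
    · simpa using ha
    · rw [Fin.cons_succ]; exact hm j
  · intro i
    refine Fin.cases ?_ (fun j => ?_) i
    · have e1 : (0 : Fin (m+1)).castSucc = 0 := rfl
      have e2 : (0 : Fin (m+1)).succ = Fin.succ 0 := rfl
      rw [e1, e2, Fin.cons_zero, Fin.cons_succ, h0]
      exact hd
    · have e1 : (j.succ).castSucc = (j.castSucc).succ := (Fin.succ_castSucc j).symm
      rw [e1, Fin.cons_succ, show (j.succ).succ = Fin.succ (j.succ) from rfl, Fin.cons_succ]
      exact hs j

lemma prependThru {A : Set (Fin n → Bool)} {a x w b : Fin n → Bool} {m : ℕ}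
    (h : myPathThru A x w b m) (hd : hammingDist a x = 1) (ha : a ∈ A) :
    myPathThru A a w b (m+1) := by
  obtain ⟨k, hk, seq, h0, hl, hm, hs, hw⟩ := h
  refine ⟨k+1, by omega, Fin.cons a seq, Fin.cons_zero _ _, ?_, ?_, ?_, ?_⟩
  · rw [show Fin.last (m+1) = (Fin.last m).succ from Fin.ext (by simp), Fin.cons_succ]
    exact hl
  · intro i
    refine Fin.cases ?_ (fun j => ?_) i
    · simpa using ha
    · rw [Fin.cons_succ]; exact hm j
  · intro i
    refine Fin.cases ?_ (fun j => ?_) i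
    · have e1 : (0 : Fin (m+1)).castSucc = 0 := rfl
      have e2 : (0 : Fin (m+1)).succ = Fin.succ 0 := rfl
      rw [e1, e2, Fin.cons_zero, Fin.cons_succ, h0]
      exact hd
    · have e1 : (j.succ).castSucc = (j.castSucc).succ := (Fin.succ_castSucc j).symm
      rw [e1, Fin.cons_succ, show (j.succ).succ = Fin.succ (j.succ) from rfl, Fin.cons_succ]
      exact hs j
  · rw [show (⟨k+1, by omega⟩ : Fin (m+1+1)) = Fin.succ ⟨k, by omega⟩ from Fin.ext (by simp),
      Fin.cons_succ]
    exact hw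

lemma tailLen {A : Set (Fin n → Bool)} {a b : Fin n → Bool} {m : ℕ}
    (h : myPathLen A a b (m+1)) : ∃ x, hammingDist a x = 1 ∧ myPathLen A x b m := by
  obtain ⟨seq, h0, hl, hm, hs⟩ := h
  refine ⟨seq (Fin.succ 0), ?_, fun i => seq i.succ, rfl, ?_, fun i => hm _, ?_⟩
  · have := hs 0
    rwa [show (0 : Fin (m+1)).castSucc = 0 from rfl, h0] at this
  · show seq (Fin.last m).succ = b
    rw [show (Fin.last m).succ = Fin.last (m+1) from Fin.ext (by simp)]
    exact hl
  · intro i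
    have := hs i.succ
    rwa [show (i.succ).castSucc = (i.castSucc).succ from (Fin.succ_castSucc i).symm] at this

lemma revLen {A : Set (Fin n → Bool)} {a b : Fin n → Bool} {m : ℕ}
    (h : myPathLen A a b m) : myPathLen A b a m := by
  obtain ⟨seq, h0, hl, hm, hs⟩ := h
  refine ⟨fun i => seq i.rev, ?_, ?_, fun i => hm _, ?_⟩
  · show seq (Fin.rev 0) = b
    rw [Fin.rev_zero]; exact hl
  · show seq (Fin.last m).rev = a
    rw [Fin.rev_last]; exact h0
  · intro i
    show hammingDist (seq (i.castSucc).rev) (seq (i.succ).rev) = 1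
    rw [Fin.rev_castSucc, Fin.rev_succ, hammingDist_comm]
    exact hs i.rev

lemma glueLen {A : Set (Fin n → Bool)} {w b : Fin n → Bool} {d2 : ℕ}
    (h2 : myPathLen A w b d2) :
    ∀ d1 : ℕ, ∀ a : Fin n → Bool, myPathLen A a w d1 → myPathThru A a w b (d1 + d2) := by
  intro d1
  induction d1 with
  | zero =>
    intro a h1
    obtain ⟨seq, h0, hl, _, _⟩ := h1
    have haw : a = w := by rw [← h0, ← hl]; rfl
    rw [Nat.zero_add]
    subst haw
    obtain ⟨seq2, h0', hl', hm', hs'⟩ := h2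
    exact ⟨0, Nat.zero_le _, seq2, h0', hl', hm', hs', h0'⟩
  | succ d1 ih =>
    intro a h1
    obtain ⟨x, hdx, htail⟩ := tailLen h1
    have ha : a ∈ A := by
      obtain ⟨seq, h0, _, hm, _⟩ := h1
      rw [← h0]; exact hm 0
    have := prependThru (ih x htail) hdx ha
    rwa [show d1 + d2 + 1 = d1 + 1 + d2 by omega] at this

lemma chain_mono (g : ℕ → Fin n → Bool) (m : ℕ)
    (hmono : ∀ i < m, ∀ j, g (i+1) j = true → g i j = true) :
    ∀ a b, a ≤ b → b ≤ m → ∀ j, g b j = true → g a j = true := by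
  intro a b hab hbm
  induction b with
  | zero => rw [Nat.le_zero.1 hab]; exact fun _ h => h
  | succ b ih =>
    rcases Nat.lt_or_ge a (b+1) with h | h
    · intro j hj
      exact ih (by omega) (by omega) j (hmono b (by omega) j hj)
    · rw [show a = b + 1 by omega]; exact fun _ h => h

lemma extract (A : Set (Fin n → Bool)) :
    ∀ (m : ℕ) (g : ℕ → Fin n → Bool), (∀ i ≤ m, g i ∈ A) →
    (∀ i < m, hammingDist (g i) (g (i+1)) ≤ 1) →
    (∀ i < m, ∀ j, g (i+1) j = true → g i j = true) →
    myPathLen A (g 0) (g m) (hammingDist (g 0) (g m)) := by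
  intro m
  induction m with
  | zero =>
    intro g hmem _ _
    rw [hammingDist_self]
    exact ⟨fun _ => g 0, rfl, rfl, fun _ => hmem 0 le_rfl, fun i => i.elim0⟩
  | succ m ih =>
    intro g hmem hlazy hmono
    have IH := ih (fun i => g (i+1)) (fun i hi => hmem (i+1) (by omega))
      (fun i hi => hlazy (i+1) (by omega)) (fun i hi => hmono (i+1) (by omega))
    have IH' : myPathLen A (g 1) (g (m+1)) (hammingDist (g 1) (g (m+1))) := by
      simpa using IH
    rcases eq_or_ne (g 0) (g 1) with h0 | h0
    · rw [h0]; exact IH'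
    · have hd1 : hammingDist (g 0) (g 1) = 1 := by
        have hl0 : hammingDist (g 0) (g 1) ≤ 1 := by simpa using hlazy 0 (by omega)
        have := hammingDist_ne_zero.2 h0
        omega
      have hadd : hammingDist (g 0) (g (m+1))
          = hammingDist (g 0) (g 1) + hammingDist (g 1) (g (m+1)) :=
        dist_sandwich _ _ _ (hmono 0 (by omega))
          (chain_mono g (m+1) hmono 1 (m+1) (by omega) le_rfl)
      rw [hadd, hd1, Nat.add_comm 1]
      exact prepend IH' hd1 (hmem 0 (by omega))

lemma dist_along {d : ℕ} (s : Fin (d+1) → Fin n → Bool)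
    (hs : ∀ i : Fin d, hammingDist (s i.castSucc) (s i.succ) = 1) :
    ∀ k, ∀ hk : k < d + 1, hammingDist (s 0) (s ⟨k, hk⟩) ≤ k := by
  intro k
  induction k with
  | zero =>
    intro hk
    rw [show (⟨0, hk⟩ : Fin (d+1)) = 0 from rfl, hammingDist_self]
  | succ k ih =>
    intro hk
    have hk0 : k < d + 1 := by omega
    have pk : k < d := by omega
    have h2 : hammingDist (s ⟨k, hk0⟩) (s ⟨k+1, hk⟩) = 1 := by
      have h := hs ⟨k, pk⟩
      have e1 : (⟨k, pk⟩ : Fin d).castSucc = ⟨k, hk0⟩ := rfl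
      have e2 : (⟨k, pk⟩ : Fin d).succ = ⟨k+1, hk⟩ := rfl
      rwa [e1, e2] at h
    calc hammingDist (s 0) (s ⟨k+1, hk⟩)
        ≤ hammingDist (s 0) (s ⟨k, hk0⟩) + hammingDist (s ⟨k, hk0⟩) (s ⟨k+1, hk⟩) :=
          hammingDist_triangle _ _ _
      _ ≤ k + 1 := by have := ih hk0; omega

lemma dist_eq_along {u v : Fin n → Bool}
    (s : Fin (hammingDist u v + 1) → Fin n → Bool) (h0 : s 0 = u)
    (hl : s (Fin.last (hammingDist u v)) = v)
    (hs : ∀ i : Fin (hammingDist u v), hammingDist (s i.castSucc) (s i.succ) = 1) :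
    ∀ k, ∀ hk : k < hammingDist u v + 1, hammingDist u (s ⟨k, hk⟩) = k := by
  intro k hk
  have hfwd : hammingDist u (s ⟨k, hk⟩) ≤ k := by
    have := dist_along s hs k hk
    rwa [h0] at this
  have hts : ∀ i : Fin (hammingDist u v),
      hammingDist (s (i.castSucc).rev) (s (i.succ).rev) = 1 := by
    intro i
    rw [Fin.rev_castSucc, Fin.rev_succ, hammingDist_comm]
    exact hs i.rev
  have hbwd : hammingDist v (s ⟨k, hk⟩) ≤ hammingDist u v - k := by
    have h := dist_along (fun i => s i.rev) (fun i => hts i)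
      (hammingDist u v - k) (by omega)
    have e0 : s (Fin.rev 0) = v := by
      rw [Fin.rev_zero]; exact hl
    have e1 : s (Fin.rev ⟨hammingDist u v - k, by omega⟩) = s ⟨k, hk⟩ := by
      exact congrArg s (Fin.ext
        (show hammingDist u v + 1 - (hammingDist u v - k + 1) = k from by omega))
    rwa [e0, e1] at h
  have htri := hammingDist_triangle u (s ⟨k, hk⟩) v
  rw [hammingDist_comm] at hbwd
  omega

lemma key (C : Set (Fin n → Bool)) (u v : Fin n → Bool) (hu : u ∈ C) (hv : v ∈ C)
    (s : Fin (hammingDist u v + 1) → Fin n → Bool) (hpath : IsShortestPath C u v s) :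
    myPathLen {x | ∃ a ∈ C, ∃ b ∈ C, x = interV a b} u (interV u v)
      (hammingDist u (interV u v)) := by
  obtain ⟨h0, hl, hm, hs⟩ := hpath
  have hdeq := dist_eq_along s h0 hl hs
  set sext : ℕ → Fin n → Bool :=
    fun i => s ⟨min i (hammingDist u v), by omega⟩ with hsext0
  have hsext : ∀ k, ∀ hk : k < hammingDist u v + 1, sext k = s ⟨k, hk⟩ := by
    intro k hk
    rw [hsext0]
    exact congrArg s (Fin.ext (show min k (hammingDist u v) = k from by omega))
  set g : ℕ → Fin n → Bool := fun i => interV (sext i) u with hg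
  have hflip : ∀ i, i < hammingDist u v →
      ∀ j, sext i j ≠ sext (i+1) j → sext i j = u j := by
    intro i hi
    refine flip_away u (sext i) (sext (i+1)) ?_ ?_
    · rw [hsext i (by omega), hsext (i+1) (by omega)]
      have h := hs ⟨i, hi⟩
      have e1 : (⟨i, hi⟩ : Fin (hammingDist u v)).castSucc = ⟨i, by omega⟩ := rfl
      have e2 : (⟨i, hi⟩ : Fin (hammingDist u v)).succ = ⟨i+1, by omega⟩ := rfl
      rwa [e1, e2] at h
    · rw [hsext i (by omega), hsext (i+1) (by omega),
        hdeq i (by omega), hdeq (i+1) (by omega)]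
  have hstep1 : ∀ i, i < hammingDist u v →
      hammingDist (sext i) (sext (i+1)) = 1 := by
    intro i hi
    rw [hsext i (by omega), hsext (i+1) (by omega)]
    have h := hs ⟨i, hi⟩
    have e1 : (⟨i, hi⟩ : Fin (hammingDist u v)).castSucc = ⟨i, by omega⟩ := rfl
    have e2 : (⟨i, hi⟩ : Fin (hammingDist u v)).succ = ⟨i+1, by omega⟩ := rfl
    rwa [e1, e2] at h
  have hE := extract {x | ∃ a ∈ C, ∃ b ∈ C, x = interV a b} (hammingDist u v) g
    (fun i _ => ⟨sext i, by rw [hsext0]; exact hm _, u, hu, rfl⟩)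
    (by
      intro i hi
      have hsub : (Finset.univ.filter fun j => g i j ≠ g (i+1) j)
          ⊆ (Finset.univ.filter fun j => sext i j ≠ sext (i+1) j) := by
        intro j hj
        simp only [Finset.mem_filter, Finset.mem_univ, true_and] at hj ⊢
        intro hab
        exact hj (by simp [hg, interV, hab])
      have h1 : hammingDist (g i) (g (i+1)) ≤ hammingDist (sext i) (sext (i+1)) :=
        Finset.card_le_card hsub
      rw [hstep1 i hi] at h1
      exact h1)
    (by
      intro i hi j hj
      simp only [hg, interV, Bool.and_eq_true] at hj ⊢
      refine ⟨?_, hj.2⟩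
      by_cases hab : sext i j = sext (i+1) j
      · rw [hab]; exact hj.1
      · rw [hflip i hi j hab]; exact hj.2)
  have hg0 : g 0 = u := by
    funext j
    show (interV (sext 0) u) j = u j
    rw [hsext 0 (by omega), show (⟨0, by omega⟩ : Fin (hammingDist u v + 1)) = 0 from rfl,
      h0]
    simp [interV]
  have hgd : g (hammingDist u v) = interV u v := by
    funext j
    show (interV (sext (hammingDist u v)) u) j = interV u v j
    rw [hsext (hammingDist u v) (by omega),
      show (⟨hammingDist u v, by omega⟩ : Fin (hammingDist u v + 1))
        = Fin.last (hammingDist u v) from rfl, hl]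
    exact Bool.and_comm _ _
  rw [hg0, hgd] at hE
  exact hE

/-- If `C` is shortest-path closed, then any `u, v ∈ C` are joined by
a shortest path all of whose vertices lie in `X = {a ⊙ b : a, b ∈ C}` and which passes
through `u ⊙ v`. -/
theorem shortestPath_through_inter (C : Set (Fin n → Bool)) (hsp : SPClosed C)
    (u v : Fin n → Bool) (hu : u ∈ C) (hv : v ∈ C) :
    ∃ seq, IsShortestPath {x | ∃ a ∈ C, ∃ b ∈ C, x = interV a b} u v seq ∧
      ∃ i, seq i = interV u v := by
  obtain ⟨s1, hs1⟩ := hsp u hu v hv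
  have P1 := key C u v hu hv s1 hs1
  obtain ⟨s2, hs2⟩ := hsp v hv u hu
  have P2 := key C v u hv hu s2 hs2
  have hc : interV v u = interV u v := funext fun j => Bool.and_comm _ _
  rw [hc] at P2
  have P2' := revLen P2
  have thru := glueLen P2' (hammingDist u (interV u v)) u P1
  have hsum : hammingDist u (interV u v) + hammingDist v (interV u v)
      = hammingDist u v := by
    rw [hammingDist_comm v (interV u v)]
    exact dist_split u v
  rw [hsum] at thru
  obtain ⟨k, hk, seq, h0, hl, hm, hst, hw⟩ := thru
  exact ⟨seq, ⟨h0, hl, hm, hst⟩, ⟨⟨k, by omega⟩, hw⟩⟩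
end

section
/- If the concept class C ⊆ {0,1}^n is intersection closed and has VC dimension d, then the class C* produced by the shortest-path closure construction has VC dimension at most 11d. -/
variable {n : ℕ}

/-- `phi d m = ∑_{k ≤ d} C(m,k)`. -/
def phi (d m : ℕ) : ℕ := ∑ k ∈ Finset.Iic d, m.choose k

lemma phi_step (d m : ℕ) : (m + 1 - d) * phi d (m + 1) ≤ (m + 1) * phi d m := by
  unfold phi
  rw [Finset.mul_sum, Finset.mul_sum]
  refine Finset.sum_le_sum fun k hk => ?_
  have hk' : k ≤ d := Finset.mem_Iic.mp hk
  calc (m + 1 - d) * (m + 1).choose k ≤ (m + 1 - k) * (m + 1).choose k :=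
        Nat.mul_le_mul_right _ (Nat.sub_le_sub_left hk' _)
    _ = (m + 1) * m.choose k := by
        rw [Nat.mul_comm (m + 1 - k), ← Nat.choose_mul_succ_eq, Nat.mul_comm]

lemma choose_le_phi (d m : ℕ) : m.choose d ≤ phi d m :=
  Finset.single_le_sum (f := fun k => m.choose k) (fun _ _ => Nat.zero_le _) (Finset.mem_Iic.mpr le_rfl)

lemma phi_level (d m : ℕ) (hdm : d < m) : (d + 1) * phi (d + 1) m ≤ (m + 1) * phi d m := by
  have h1 : phi (d + 1) m = phi d m + m.choose (d + 1) := by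
    have he : Finset.Iic (d + 1) = insert (d + 1) (Finset.Iic d) := by
      ext x; simp [Finset.mem_Iic]; omega
    unfold phi
    rw [he, Finset.sum_insert (by simp), Nat.add_comm]
  have h2 : m.choose (d + 1) * (d + 1) = m.choose d * (m - d) := Nat.choose_succ_right_eq m d
  have h3 : m.choose d * (m - d) ≤ phi d m * (m - d) :=
    Nat.mul_le_mul_right _ (choose_le_phi d m)
  have h4 : (d + 1) + (m - d) ≤ m + 1 := by omega
  calc (d + 1) * phi (d + 1) m = (d + 1) * phi d m + m.choose (d + 1) * (d + 1) := by
        rw [h1]; ring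
    _ ≤ (d + 1) * phi d m + phi d m * (m - d) := by
        rw [h2]; exact Nat.add_le_add_left h3 _
    _ = ((d + 1) + (m - d)) * phi d m := by ring
    _ ≤ (m + 1) * phi d m := Nat.mul_le_mul_right _ h4

lemma Gstep2 (d m : ℕ) (hdm : 11 * d + 1 ≤ m) :
    (m + 2) * phi d (m + 1) ^ 2 ≤ 2 * ((m + 1) * phi d m ^ 2) := by
  set a := m + 1 - d with ha
  have hle : 10 * m + 12 ≤ 11 * a := by omega
  have hapos : 0 < a ^ 2 := pow_pos (by omega) 2 
  have key : a * phi d (m + 1) ≤ (m + 1) * phi d m := phi_step d m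
  have sq : (a * phi d (m + 1)) ^ 2 ≤ ((m + 1) * phi d m) ^ 2 := Nat.pow_le_pow_left key 2
  have arith : (m + 2) * (m + 1) ≤ 2 * a ^ 2 := by
    have h1 : (10 * m + 12) ^ 2 ≤ (11 * a) ^ 2 := Nat.pow_le_pow_left hle 2
    have h2 : 121 * ((m + 2) * (m + 1)) ≤ 121 * (2 * a ^ 2) := by nlinarith [h1]
    exact Nat.le_of_mul_le_mul_left h2 (by norm_num)
  have chain : a ^ 2 * ((m + 2) * phi d (m + 1) ^ 2) ≤ a ^ 2 * (2 * ((m + 1) * phi d m ^ 2)) := by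
    calc a ^ 2 * ((m + 2) * phi d (m + 1) ^ 2) = (m + 2) * (a * phi d (m + 1)) ^ 2 := by ring
      _ ≤ (m + 2) * ((m + 1) * phi d m) ^ 2 := Nat.mul_le_mul_left _ sq
      _ = ((m + 2) * (m + 1)) * ((m + 1) * phi d m ^ 2) := by ring
      _ ≤ (2 * a ^ 2) * ((m + 1) * phi d m ^ 2) := Nat.mul_le_mul_right _ arith
      _ = a ^ 2 * (2 * ((m + 1) * phi d m ^ 2)) := by ring
  exact Nat.le_of_mul_le_mul_left chain hapos

lemma Gstep54 (d m : ℕ) (hm : 23 ≤ m) (hdm : 11 * d + 1 ≤ m) :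
    4 * ((m + 2) * phi d (m + 1) ^ 2) ≤ 5 * ((m + 1) * phi d m ^ 2) := by
  set a := m + 1 - d with ha
  have hle : 10 * m + 12 ≤ 11 * a := by omega
  have hapos : 0 < a ^ 2 := pow_pos (by omega) 2
  have key : a * phi d (m + 1) ≤ (m + 1) * phi d m := phi_step d m
  have sq : (a * phi d (m + 1)) ^ 2 ≤ ((m + 1) * phi d m) ^ 2 := Nat.pow_le_pow_left key 2
  have arith : 4 * ((m + 2) * (m + 1)) ≤ 5 * a ^ 2 := by
    have h1 : (10 * m + 12) ^ 2 ≤ (11 * a) ^ 2 := Nat.pow_le_pow_left hle 2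
    have h2 : 121 * (4 * ((m + 2) * (m + 1))) ≤ 121 * (5 * a ^ 2) := by nlinarith [h1]
    exact Nat.le_of_mul_le_mul_left h2 (by norm_num)
  have chain : a ^ 2 * (4 * ((m + 2) * phi d (m + 1) ^ 2))
      ≤ a ^ 2 * (5 * ((m + 1) * phi d m ^ 2)) := by
    calc a ^ 2 * (4 * ((m + 2) * phi d (m + 1) ^ 2))
        = (4 * (m + 2)) * (a * phi d (m + 1)) ^ 2 := by ring
      _ ≤ (4 * (m + 2)) * ((m + 1) * phi d m) ^ 2 := Nat.mul_le_mul_left _ sq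
      _ = (4 * ((m + 2) * (m + 1))) * ((m + 1) * phi d m ^ 2) := by ring
      _ ≤ (5 * a ^ 2) * ((m + 1) * phi d m ^ 2) := Nat.mul_le_mul_right _ arith
      _ = a ^ 2 * (5 * ((m + 1) * phi d m ^ 2)) := by ring
  exact Nat.le_of_mul_le_mul_left chain hapos

lemma G11 (d : ℕ) (hd : 2 ≤ d) :
    4 ^ 11 * ((11 * d + 13) * phi d (11 * d + 12) ^ 2)
      ≤ 5 ^ 11 * ((11 * d + 2) * phi d (11 * d + 1) ^ 2) := by
  have H : ∀ i : ℕ, i ≤ 11 →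
      4 ^ i * ((11 * d + 1 + i + 1) * phi d (11 * d + 1 + i) ^ 2)
        ≤ 5 ^ i * ((11 * d + 2) * phi d (11 * d + 1) ^ 2) := by
    intro i
    induction i with
    | zero => intro _; simp
    | succ i ih =>
      intro h
      have hi := ih (by omega)
      have hs := Gstep54 d (11 * d + 1 + i) (by omega) (by omega)
      calc 4 ^ (i + 1) * ((11 * d + 1 + (i + 1) + 1) * phi d (11 * d + 1 + (i + 1)) ^ 2)
          = 4 ^ i * (4 * ((11 * d + 1 + i + 1 + 1) * phi d (11 * d + 1 + i + 1) ^ 2)) := by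
            ring_nf
        _ ≤ 4 ^ i * (5 * ((11 * d + 1 + i + 1) * phi d (11 * d + 1 + i) ^ 2)) :=
            Nat.mul_le_mul_left _ hs
        _ = 5 * (4 ^ i * ((11 * d + 1 + i + 1) * phi d (11 * d + 1 + i) ^ 2)) := by ring
        _ ≤ 5 * (5 ^ i * ((11 * d + 2) * phi d (11 * d + 1) ^ 2)) := Nat.mul_le_mul_left _ hi
        _ = 5 ^ (i + 1) * ((11 * d + 2) * phi d (11 * d + 1) ^ 2) := by ring
  have h11 := H 11 le_rfl
  have e1 : 11 * d + 1 + 11 = 11 * d + 12 := by omega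
  have e2 : 11 * d + 1 + 11 + 1 = 11 * d + 13 := by omega
  rwa [e1, e2] at h11

lemma P_base1 : (13 : ℕ) * phi 1 12 ^ 2 < 2 ^ 12 := by decide

lemma P_base2 : (24 : ℕ) * phi 2 23 ^ 2 < 2 ^ 23 := by decide

lemma Pd (d : ℕ) (hd : 1 ≤ d) : (11 * d + 2) * phi d (11 * d + 1) ^ 2 < 2 ^ (11 * d + 1) := by
  rcases Nat.lt_or_ge d 2 with h2 | h2
  · have : d = 1 := by omega
    subst this
    exact P_base1
  · induction d, h2 using Nat.le_induction with
    | base => exact P_base2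
    | succ d hd2 ih =>
      have IH := ih (by omega)
      have lvl : (d + 1) * phi (d + 1) (11 * d + 12) ≤ (11 * d + 13) * phi d (11 * d + 12) :=
        phi_level d (11 * d + 12) (by omega)
      have g11 := G11 d hd2
      set A := phi d (11 * d + 12) with hA
      set B := phi (d + 1) (11 * d + 12) with hB
      have sq : ((d + 1) * B) ^ 2 ≤ ((11 * d + 13) * A) ^ 2 := Nat.pow_le_pow_left lvl 2
      have c1 : (d + 1) ^ 2 * (4 ^ 11 * ((11 * d + 13) * B ^ 2))
          ≤ (11 * d + 13) ^ 2 * (5 ^ 11 * ((11 * d + 2) * phi d (11 * d + 1) ^ 2)) := by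
        calc (d + 1) ^ 2 * (4 ^ 11 * ((11 * d + 13) * B ^ 2))
            = 4 ^ 11 * ((11 * d + 13) * ((d + 1) * B) ^ 2) := by ring
          _ ≤ 4 ^ 11 * ((11 * d + 13) * ((11 * d + 13) * A) ^ 2) := by
              exact Nat.mul_le_mul_left _ (Nat.mul_le_mul_left _ sq)
          _ = (11 * d + 13) ^ 2 * (4 ^ 11 * ((11 * d + 13) * A ^ 2)) := by ring
          _ ≤ (11 * d + 13) ^ 2 * (5 ^ 11 * ((11 * d + 2) * phi d (11 * d + 1) ^ 2)) :=
              Nat.mul_le_mul_left _ g11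
      have c2 : (11 * d + 13) ^ 2 * (5 ^ 11 * ((11 * d + 2) * phi d (11 * d + 1) ^ 2))
          < (11 * d + 13) ^ 2 * (5 ^ 11 * 2 ^ (11 * d + 1)) := by
        exact mul_lt_mul_of_pos_left (mul_lt_mul_of_pos_left IH (by positivity)) (by positivity)
      have c3 : (11 * d + 13) ^ 2 * (5 ^ 11 * 2 ^ (11 * d + 1))
          ≤ (d + 1) ^ 2 * (4 ^ 11 * 2 ^ (11 * d + 12)) := by
        have h3 : 3 * (11 * d + 13) ≤ 35 * (d + 1) := by omega
        have h4 : (3 * (11 * d + 13)) ^ 2 ≤ (35 * (d + 1)) ^ 2 := Nat.pow_le_pow_left h3 2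
        have h5 : (1225 : ℕ) * 5 ^ 11 ≤ 9 * (4 ^ 11 * 2 ^ 11) := by norm_num
        have e : (2 : ℕ) ^ (11 * d + 12) = 2 ^ 11 * 2 ^ (11 * d + 1) := by
          rw [show 11 * d + 12 = 11 + (11 * d + 1) by omega, pow_add]
        have h7 : 9 * (11 * d + 13) ^ 2 * 5 ^ 11 ≤ 9 * (d + 1) ^ 2 * (4 ^ 11 * 2 ^ 11) := by
          calc 9 * (11 * d + 13) ^ 2 * 5 ^ 11 = (3 * (11 * d + 13)) ^ 2 * 5 ^ 11 := by ring
            _ ≤ (35 * (d + 1)) ^ 2 * 5 ^ 11 := Nat.mul_le_mul_right _ h4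
            _ = (d + 1) ^ 2 * (1225 * 5 ^ 11) := by ring
            _ ≤ (d + 1) ^ 2 * (9 * (4 ^ 11 * 2 ^ 11)) := Nat.mul_le_mul_left _ h5
            _ = 9 * (d + 1) ^ 2 * (4 ^ 11 * 2 ^ 11) := by ring
        have h8 : 9 * ((11 * d + 13) ^ 2 * (5 ^ 11 * 2 ^ (11 * d + 1)))
            ≤ 9 * ((d + 1) ^ 2 * (4 ^ 11 * 2 ^ (11 * d + 12))) := by
          calc 9 * ((11 * d + 13) ^ 2 * (5 ^ 11 * 2 ^ (11 * d + 1)))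
              = (9 * (11 * d + 13) ^ 2 * 5 ^ 11) * 2 ^ (11 * d + 1) := by ring
            _ ≤ (9 * (d + 1) ^ 2 * (4 ^ 11 * 2 ^ 11)) * 2 ^ (11 * d + 1) :=
                Nat.mul_le_mul_right _ h7
            _ = 9 * ((d + 1) ^ 2 * (4 ^ 11 * (2 ^ 11 * 2 ^ (11 * d + 1)))) := by ring
            _ = 9 * ((d + 1) ^ 2 * (4 ^ 11 * 2 ^ (11 * d + 12))) := by rw [← e]
        exact Nat.le_of_mul_le_mul_left h8 (by norm_num)
      have main : (d + 1) ^ 2 * (4 ^ 11 * ((11 * d + 13) * B ^ 2))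
          < (d + 1) ^ 2 * (4 ^ 11 * 2 ^ (11 * d + 12)) :=
        lt_of_le_of_lt c1 (lt_of_lt_of_le c2 c3)
      have main' : ((d + 1) ^ 2 * 4 ^ 11) * ((11 * d + 13) * B ^ 2)
          < ((d + 1) ^ 2 * 4 ^ 11) * 2 ^ (11 * d + 12) := by
        calc ((d + 1) ^ 2 * 4 ^ 11) * ((11 * d + 13) * B ^ 2)
            = (d + 1) ^ 2 * (4 ^ 11 * ((11 * d + 13) * B ^ 2)) := by ring
          _ < (d + 1) ^ 2 * (4 ^ 11 * 2 ^ (11 * d + 12)) := main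
          _ = ((d + 1) ^ 2 * 4 ^ 11) * 2 ^ (11 * d + 12) := by ring
      have main2 : (11 * d + 13) * B ^ 2 < 2 ^ (11 * d + 12) :=
        Nat.lt_of_mul_lt_mul_left main'
      have e1 : 11 * (d + 1) + 2 = 11 * d + 13 := by omega
      have e2 : 11 * (d + 1) + 1 = 11 * d + 12 := by omega
      rw [e1, e2]
      exact main2

lemma Qlem (d m : ℕ) (hd : 1 ≤ d) (hm : 11 * d + 1 ≤ m) :
    (m + 1) * phi d m ^ 2 < 2 ^ m := by
  induction m, hm using Nat.le_induction with
  | base => exact Pd d hd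
  | succ m hm ih =>
    calc (m + 1 + 1) * phi d (m + 1) ^ 2 ≤ 2 * ((m + 1) * phi d m ^ 2) := Gstep2 d m hm
      _ < 2 * 2 ^ m := mul_lt_mul_of_pos_left ih (by norm_num)
      _ = 2 ^ (m + 1) := (pow_succ' 2 m).symm



def rankIn (π : Equiv.Perm (Fin n)) (S : Finset (Fin n)) (i : Fin n) : ℕ :=
  (S.filter fun i' => π i' < π i).card

lemma rankIn_lt_rankIn (π : Equiv.Perm (Fin n)) {S : Finset (Fin n)} {a b : Fin n}
    (hb : b ∈ S) (h : π b < π a) : rankIn π S b < rankIn π S a := by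
  have hsub : S.filter (fun c => π c < π b) ⊆ (S.filter fun c => π c < π a).erase b := by
    intro c hc
    rcases Finset.mem_filter.mp hc with ⟨hcS, hcb⟩
    refine Finset.mem_erase.mpr ⟨?_, Finset.mem_filter.mpr ⟨hcS, hcb.trans h⟩⟩
    rintro rfl; exact lt_irrefl _ hcb
  exact (Finset.card_le_card hsub).trans_lt
    (Finset.card_erase_lt_of_mem (Finset.mem_filter.mpr ⟨hb, h⟩))

lemma rank_char (π : Equiv.Perm (Fin n)) {S T : Finset (Fin n)} (hTS : T ⊆ S)
    (hdc : ∀ i ∈ T, ∀ i' ∈ S, π i' < π i → i' ∈ T) {i : Fin n} (hi : i ∈ S) :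
    i ∈ T ↔ rankIn π S i < T.card := by
  constructor
  · intro hiT
    have hsub : S.filter (fun c => π c < π i) ⊆ T.erase i := by
      intro c hc
      rcases Finset.mem_filter.mp hc with ⟨hcS, hci⟩
      exact Finset.mem_erase.mpr ⟨by rintro rfl; exact lt_irrefl _ hci, hdc i hiT c hcS hci⟩
    exact (Finset.card_le_card hsub).trans_lt (Finset.card_erase_lt_of_mem hiT)
  · intro h
    by_contra hiT
    have hsub : T ⊆ S.filter fun c => π c < π i := by
      intro t ht
      refine Finset.mem_filter.mpr ⟨hTS ht, ?_⟩
      have hne : t ≠ i := by rintro rfl; exact hiT ht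
      have hne' : π t ≠ π i := fun he => hne (π.injective he)
      rcases lt_or_gt_of_ne hne' with hlt | hgt
      · exact hlt
      · exact absurd (hdc t ht i hi hgt) hiT
    exact absurd (Finset.card_le_card hsub) (Nat.not_le.mpr h)

def mixF (π : Equiv.Perm (Fin n)) (I : Finset (Fin n)) (p q : {i // i ∈ I} → Bool) (k : ℕ) :
    {i // i ∈ I} → Bool := fun i =>
  if (p i = true ∧ q i = false) ∧
      (I.attach.filter fun i' => (p i' = true ∧ q i' = false) ∧ π i'.1 < π i.1).card < k
  then false else p i

lemma mixF_self (π : Equiv.Perm (Fin n)) (I : Finset (Fin n)) (p : {i // i ∈ I} → Bool)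
    (k : ℕ) : mixF π I p p k = p := by
  funext i
  refine if_neg ?_
  rintro ⟨⟨h1, h2⟩, -⟩
  rw [h1] at h2
  exact absurd h2 (by simp)

lemma proj_stepVert (π : Equiv.Perm (Fin n)) (v w : Fin n → Bool) (j : ℕ)
    (I : Finset (Fin n)) :
    ∃ k ≤ I.card, proj I (stepVert π v w j) = mixF π I (proj I v) (proj I w) k := by
  classical
  set Δ := delta v w with hΔ
  set Z := Δ.filter (fun i => rankIn π Δ i < j) with hZ
  set S := Δ ∩ I with hS
  set T := Z ∩ I with hT
  have hTS : T ⊆ S := Finset.inter_subset_inter (Finset.filter_subset _ _) Finset.Subset.rfl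
  have hdc : ∀ i ∈ T, ∀ i' ∈ S, π i' < π i → i' ∈ T := by
    intro a ha b hb hlt
    rcases Finset.mem_inter.mp ha with ⟨haZ, haI⟩
    rcases Finset.mem_inter.mp hb with ⟨hbΔ, hbI⟩
    rcases Finset.mem_filter.mp haZ with ⟨haΔ, haj⟩
    refine Finset.mem_inter.mpr ⟨Finset.mem_filter.mpr ⟨hbΔ, ?_⟩, hbI⟩
    exact (rankIn_lt_rankIn π hbΔ hlt).trans haj
  refine ⟨T.card, Finset.card_le_card Finset.inter_subset_right, ?_⟩
  funext i
  have hpq : ∀ i' : {x // x ∈ I}, ((proj I v i' = true ∧ proj I w i' = false) ↔ i'.1 ∈ Δ) := by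
    intro i'
    simp [proj, hΔ, delta, Finset.mem_filter]
  have hcard : (I.attach.filter fun i' =>
      (proj I v i' = true ∧ proj I w i' = false) ∧ π i'.1 < π i.1).card = rankIn π S i.1 := by
    have he : (I.attach.filter fun i' =>
        (proj I v i' = true ∧ proj I w i' = false) ∧ π i'.1 < π i.1)
        = I.attach.filter fun i' => i'.1 ∈ Δ ∧ π i'.1 < π i.1 := by
      apply Finset.filter_congr
      intro i' _
      rw [hpq i']
    rw [he]
    rw [Finset.filter_attach (fun x => x ∈ Δ ∧ π x < π i.1) I, Finset.card_map,
      Finset.card_attach]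
    have he2 : I.filter (fun x => x ∈ Δ ∧ π x < π i.1) = S.filter fun c => π c < π i.1 := by
      ext x
      simp only [Finset.mem_filter, hS, Finset.mem_inter]
      tauto
    rw [he2]
    rfl
  show stepVert π v w j i.1 = mixF π I (proj I v) (proj I w) T.card i
  rw [stepVert, mixF]
  rw [hcard]
  by_cases hΔi : i.1 ∈ Δ
  · have hSi : i.1 ∈ S := Finset.mem_inter.mpr ⟨hΔi, i.2⟩
    have hiff := rank_char π hTS hdc hSi
    have hl : (i.1 ∈ Δ ∧ ((Δ.filter fun i' => π i' < π i.1).card < j)) ↔ i.1 ∈ T := by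
      constructor
      · rintro ⟨h1, h2⟩
        exact Finset.mem_inter.mpr ⟨Finset.mem_filter.mpr ⟨h1, h2⟩, i.2⟩
      · intro h
        rcases Finset.mem_filter.mp (Finset.mem_inter.mp h).1 with ⟨h1, h2⟩
        exact ⟨h1, h2⟩
    have hr : ((proj I v i = true ∧ proj I w i = false) ∧ rankIn π S i.1 < T.card)
        ↔ i.1 ∈ T := by
      rw [hpq i]
      constructor
      · rintro ⟨-, h2⟩
        exact hiff.mpr h2
      · intro h
        exact ⟨hΔi, hiff.mp h⟩
    rw [if_congr (hl.trans hr.symm) rfl rfl]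
    rfl
  · have hnl : ¬(i.1 ∈ Δ ∧ ((Δ.filter fun i' => π i' < π i.1).card < j)) := fun h => hΔi h.1
    have hnr : ¬((proj I v i = true ∧ proj I w i = false) ∧ rankIn π S i.1 < T.card) := by
      rintro ⟨h1, -⟩
      exact hΔi ((hpq i).mp h1)
    rw [if_neg hnl, if_neg hnr]
    rfl



lemma vc_bdd (C : Set (Fin n → Bool)) :
    BddAbove {k | ∃ I : Finset (Fin n), I.card = k ∧ Shatters C I} := by
  refine ⟨n, ?_⟩
  rintro k ⟨I, rfl, -⟩
  exact (Finset.card_le_univ I).trans_eq (by simp)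

lemma finsetShatters_to_shatters (C : Set (Fin n → Bool)) (I : Finset (Fin n))
    (NF : Finset ({i // i ∈ I} → Bool)) (hNF : ∀ b ∈ NF, b ∈ proj I '' C)
    (s : Finset {i // i ∈ I})
    (hs : (NF.image (fun b => Finset.univ.filter fun i => b i = true)).Shatters s) :
    Shatters C (s.image Subtype.val) := by
  classical
  rw [Shatters, Set.eq_univ_iff_forall]
  intro g
  have hts : (s.filter fun i0 => ∃ h : i0.1 ∈ s.image Subtype.val, g ⟨i0.1, h⟩ = true) ⊆ s :=
    Finset.filter_subset _ _
  obtain ⟨A, hA, hsA⟩ := hs hts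
  obtain ⟨b, hbNF, rfl⟩ := Finset.mem_image.mp hA
  obtain ⟨u, huC, hub⟩ := hNF b hbNF
  refine ⟨u, huC, ?_⟩
  funext x
  obtain ⟨i, hiJ⟩ := x
  obtain ⟨i', hi's, hi'val⟩ := Finset.mem_image.mp hiJ
  subst hi'val
  have hbi : b i' = u i'.1 := by rw [← hub]; rfl
  have hmem := Finset.ext_iff.mp hsA i'
  simp only [Finset.mem_inter, Finset.mem_filter, Finset.mem_univ, true_and, hi's,
    true_and] at hmem
  have key : b i' = true ↔ g ⟨i'.1, hiJ⟩ = true := by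
    rw [hmem]
    constructor
    · rintro ⟨h, hg⟩
      exact hg
    · intro hg
      exact ⟨hiJ, hg⟩
  show u i'.1 = g ⟨i'.1, hiJ⟩
  rw [← hbi]
  exact Bool.eq_iff_iff.mpr key

lemma trace_card_le (C : Set (Fin n → Bool)) (d : ℕ) (hd : VCdim C = d)
    (I : Finset (Fin n)) (NF : Finset ({i // i ∈ I} → Bool))
    (hNF : ∀ b ∈ NF, b ∈ proj I '' C) : NF.card ≤ phi d I.card := by
  classical
  have hinj : Function.Injective
      (fun b : {i // i ∈ I} → Bool => Finset.univ.filter fun i => b i = true) := by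
    intro b b' h
    funext i
    have := Finset.ext_iff.mp h i
    simp only [Finset.mem_filter, Finset.mem_univ, true_and] at this
    cases hb : b i <;> cases hb' : b' i <;> simp_all
  set 𝒜 := NF.image (fun b => Finset.univ.filter fun i => b i = true) with h𝒜
  have hvc : 𝒜.vcDim ≤ d := by
    rw [Finset.vcDim]
    apply Finset.sup_le
    intro s hs
    rw [Finset.mem_shatterer] at hs
    have hShat := finsetShatters_to_shatters C I NF hNF s hs
    have hcard : (s.image Subtype.val).card = s.card :=
      Finset.card_image_of_injective _ Subtype.val_injective
    have hle : (s.image Subtype.val).card ≤ VCdim C :=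
      le_csSup (vc_bdd C) ⟨_, rfl, hShat⟩
    omega
  calc NF.card = 𝒜.card := (Finset.card_image_of_injective _ hinj).symm
    _ ≤ 𝒜.shatterer.card := Finset.card_le_card_shatterer 𝒜
    _ ≤ ∑ k ∈ Finset.Iic 𝒜.vcDim, (Fintype.card {i // i ∈ I}).choose k :=
        Finset.card_shatterer_le_sum_vcDim
    _ ≤ ∑ k ∈ Finset.Iic d, (Fintype.card {i // i ∈ I}).choose k :=
        Finset.sum_le_sum_of_subset (Finset.Iic_subset_Iic.mpr hvc)
    _ = phi d I.card := by rw [Fintype.card_coe]; rfl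


/-- If `C` is intersection closed and has VC dimension `d`, then the
class `C*` produced by the shortest-path closure construction has VC dimension at most
`11 d`. -/

theorem spClosure_VCdim (π : Equiv.Perm (Fin n)) (C : Set (Fin n → Bool)) (d : ℕ)
    (hic : IntersectionClosed C) (hd : VCdim C = d) :
    VCdim (spClosure π C) ≤ 11 * d := by
  classical
  unfold VCdim
  apply csSup_le'
  rintro k ⟨I, rfl, hsh⟩
  by_contra hgt
  push_neg at hgt
  have hsh' : proj I '' (spClosure π C) = Set.univ := hsh
  set NF : Finset ({i // i ∈ I} → Bool) :=
    Finset.univ.filter (fun b => b ∈ proj I '' C) with hNFdef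
  have hNFmem : ∀ b ∈ NF, b ∈ proj I '' C := fun b hb => (Finset.mem_filter.mp hb).2
  have h1 : (Finset.univ : Finset ({i // i ∈ I} → Bool)).card = 2 ^ I.card := by
    rw [Finset.card_univ, Fintype.card_fun, Fintype.card_bool, Fintype.card_coe]
  have hsub : (Finset.univ : Finset ({i // i ∈ I} → Bool)) ⊆
      (NF ×ˢ NF ×ˢ Finset.range (I.card + 1)).image
        (fun x => mixF π I x.1 x.2.1 x.2.2) := by
    intro b _
    have hb : b ∈ proj I '' (spClosure π C) := by
      rw [hsh']; exact Set.mem_univ b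
    obtain ⟨x, hx, hpb⟩ := hb
    obtain ⟨v, hv, w, hw, hle, j, hj, rfl⟩ := hx
    obtain ⟨kk, hkk, hmix⟩ := proj_stepVert π v w j I
    refine Finset.mem_image.mpr ⟨⟨proj I v, proj I w, kk⟩, ?_, ?_⟩
    · refine Finset.mem_product.mpr ⟨?_, Finset.mem_product.mpr ⟨?_, ?_⟩⟩
      · exact Finset.mem_filter.mpr ⟨Finset.mem_univ _, ⟨v, hv, rfl⟩⟩
      · exact Finset.mem_filter.mpr ⟨Finset.mem_univ _, ⟨w, hw, rfl⟩⟩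
      · exact Finset.mem_range.mpr (Nat.lt_succ_of_le hkk)
    · rw [← hmix, hpb]
  have hcount : 2 ^ I.card ≤ NF.card * (NF.card * (I.card + 1)) := by
    calc 2 ^ I.card = (Finset.univ : Finset ({i // i ∈ I} → Bool)).card := h1.symm
      _ ≤ ((NF ×ˢ NF ×ˢ Finset.range (I.card + 1)).image
            (fun x => mixF π I x.1 x.2.1 x.2.2)).card := Finset.card_le_card hsub
      _ ≤ (NF ×ˢ NF ×ˢ Finset.range (I.card + 1)).card := Finset.card_image_le
      _ = NF.card * (NF.card * (I.card + 1)) := by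
          rw [Finset.card_product, Finset.card_product, Finset.card_range]
  have hNle : NF.card ≤ phi d I.card := trace_card_le C d hd I NF hNFmem
  rcases Nat.eq_zero_or_pos d with hd0 | hd1
  · subst hd0
    have hphi : phi 0 I.card = 1 := by
      unfold phi
      rw [show Finset.Iic 0 = {0} by ext x; simp, Finset.sum_singleton, Nat.choose_zero_right]
    have hN1 : NF.card ≤ 1 := by rw [hphi] at hNle; exact hNle
    have huniv : (Finset.univ : Finset ({i // i ∈ I} → Bool)) ⊆ NF := by
      intro b hb
      obtain ⟨⟨p, q, kk⟩, hmem, heq⟩ := Finset.mem_image.mp (hsub hb)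
      have hp : p ∈ NF := (Finset.mem_product.mp hmem).1
      have hq : q ∈ NF := (Finset.mem_product.mp (Finset.mem_product.mp hmem).2).1
      have hpq : p = q := Finset.card_le_one.mp hN1 p hp q hq
      subst hpq
      rw [mixF_self] at heq
      rw [← heq]
      exact hp
    have hle1 : (2:ℕ) ^ I.card ≤ 1 := by
      calc (2:ℕ) ^ I.card = (Finset.univ : Finset ({i // i ∈ I} → Bool)).card := h1.symm
        _ ≤ NF.card := Finset.card_le_card huniv
        _ ≤ 1 := hN1
    have h2 : 1 ≤ I.card := by omega
    have h3 : 2 ≤ 2 ^ I.card := by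
      calc (2:ℕ) = 2 ^ 1 := rfl
        _ ≤ 2 ^ I.card := Nat.pow_le_pow_right (by norm_num) h2
    omega
  · have hQ := Qlem d I.card hd1 (by omega)
    have hfin : 2 ^ I.card ≤ (I.card + 1) * phi d I.card ^ 2 := by
      calc 2 ^ I.card ≤ NF.card * (NF.card * (I.card + 1)) := hcount
        _ ≤ phi d I.card * (phi d I.card * (I.card + 1)) :=
            Nat.mul_le_mul hNle (Nat.mul_le_mul_right _ hNle)
        _ = (I.card + 1) * phi d I.card ^ 2 := by ring
    omega
end

section
/- Every intersection-closed concept class C ⊆ {0,1}^n of VC dimension d admits an unlabelled compression scheme of size at most 11d. -/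
variable {n : ℕ}

section Aux

attribute [local instance] Classical.propDecidable

/-- Closure operator: the intersection of all members of `C` whose ones contain `S`. -/
noncomputable def clo (C : Set (Fin n → Bool)) (S : Finset (Fin n)) : Fin n → Bool :=
  fun i => decide (∀ w ∈ C, (∀ j ∈ S, w j = true) → w i = true)

lemma clo_le {C : Set (Fin n → Bool)} {S : Finset (Fin n)} {w : Fin n → Bool}
    (hw : w ∈ C) (hS : ∀ j ∈ S, w j = true) :
    ∀ i, clo C S i = true → w i = true := by
  intro i hi
  have := of_decide_eq_true hi
  exact this w hw hS

lemma clo_self {C : Set (Fin n → Bool)} {S : Finset (Fin n)} {j : Fin n} (hj : j ∈ S) :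
    clo C S j = true := by
  apply decide_eq_true
  intro w _ hw
  exact hw j hj

lemma clo_mono {C : Set (Fin n → Bool)} {S T : Finset (Fin n)} (hST : S ⊆ T) :
    ∀ i, clo C S i = true → clo C T i = true := by
  intro i hi
  apply decide_eq_true
  intro w hw hT
  exact of_decide_eq_true hi w hw (fun j hj => hT j (hST hj))

/-- The pointwise AND over a finite nonempty subfamily of an intersection-closed
class belongs to the class. -/
lemma bigAnd_mem {C : Set (Fin n → Bool)} (hic : IntersectionClosed C)
    (F : Finset (Fin n → Bool)) (hne : F.Nonempty) (hsub : ↑F ⊆ C) :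
    (fun i => decide (∀ w ∈ F, w i = true)) ∈ C := by
  induction hne using Finset.Nonempty.cons_induction with
  | singleton a =>
    have ha : a ∈ C := hsub (by simp)
    have : (fun i => decide (∀ w ∈ ({a} : Finset (Fin n → Bool)), w i = true)) = a := by
      funext i
      simp
    rwa [this]
  | cons a F ha hne ih =>
    have haC : a ∈ C := hsub (by simp)
    have hFC : ↑F ⊆ C := by
      intro x hx
      exact hsub (by simpa using Or.inr hx)
    have hF := ih hFC
    have key : (fun i => decide (∀ w ∈ Finset.cons a F ha, w i = true)) =
        interV a (fun i => decide (∀ w ∈ F, w i = true)) := by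
      funext i
      simp only [interV]
      have h1 : decide (∀ w ∈ Finset.cons a F ha, w i = true) =
          decide ((a i = true) ∧ ∀ w ∈ F, w i = true) := decide_eq_decide.mpr (by simp)
      rw [h1, Bool.decide_and, Bool.decide_coe]
    rw [key]
    exact hic a haC _ hF

/-- `clo C S` is a member of `C` provided some member of `C` contains `S`. -/
lemma clo_mem {C : Set (Fin n → Bool)} (hic : IntersectionClosed C)
    {S : Finset (Fin n)} {v : Fin n → Bool} (hv : v ∈ C) (hS : ∀ j ∈ S, v j = true) :
    clo C S ∈ C := by
  set F : Finset (Fin n → Bool) :=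
    Finset.univ.filter (fun w => w ∈ C ∧ ∀ j ∈ S, w j = true) with hF
  have hne : F.Nonempty := ⟨v, Finset.mem_filter.mpr ⟨Finset.mem_univ v, hv, hS⟩⟩
  have hsub : ↑F ⊆ C := by
    intro x hx
    simp only [hF, Finset.coe_filter, Set.mem_setOf_eq] at hx
    exact hx.2.1
  have : clo C S = fun i => decide (∀ w ∈ F, w i = true) := by
    funext i
    apply decide_eq_decide.mpr
    constructor
    · intro h w hw
      simp only [hF, Finset.mem_filter] at hw
      exact h w hw.2.1 hw.2.2
    · intro h w hw hw2
      exact h w (Finset.mem_filter.mpr ⟨Finset.mem_univ w, hw, hw2⟩)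
  rw [this]
  exact bigAnd_mem hic F hne hsub

/-- The closure of the set of ones of `v ∈ C` is `v` itself. -/
lemma clo_ones {C : Set (Fin n → Bool)} {v : Fin n → Bool} (hv : v ∈ C) :
    clo C (Finset.univ.filter (fun i => v i = true)) = v := by
  funext i
  cases hvi : v i with
  | true =>
    exact clo_self (by simp [hvi])
  | false =>
    by_contra h
    have hct : clo C (Finset.univ.filter (fun i => v i = true)) i = true := by
      revert h
      cases clo C (Finset.univ.filter (fun i => v i = true)) i <;> simp
    have := clo_le hv (fun j hj => by simpa using hj) i hct
    rw [hvi] at this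
    exact Bool.false_ne_true this

/-- For every `v ∈ C` (with `C` intersection closed) there is a spanning set of `v`
that is shattered by `C`. -/
lemma exists_spanning {C : Set (Fin n → Bool)} (hic : IntersectionClosed C)
    {v : Fin n → Bool} (hv : v ∈ C) :
    ∃ S : Finset (Fin n), clo C S = v ∧ Shatters C S := by
  -- pick a spanning set of minimal cardinality
  have hex : (Finset.univ.filter (fun S : Finset (Fin n) => clo C S = v)).Nonempty :=
    ⟨Finset.univ.filter (fun i => v i = true),
      Finset.mem_filter.mpr ⟨Finset.mem_univ _, clo_ones hv⟩⟩
  obtain ⟨S, hSmem, hSmin⟩ := Finset.exists_min_image _ Finset.card hex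
  have hSspan : clo C S = v := by simpa using hSmem
  have hSones : ∀ j ∈ S, v j = true := fun j hj => by
    rw [← hSspan]; exact clo_self hj
  refine ⟨S, hSspan, ?_⟩
  -- minimality: removing a point destroys spanning
  have hmin : ∀ j ∈ S, clo C (S.erase j) ≠ v := by
    intro j hj hcon
    have h1 : (S.erase j).card < S.card := Finset.card_erase_lt_of_mem hj
    have h2 := hSmin (S.erase j) (by simp [hcon])
    omega
  -- removing j forces coordinate j of the closure to be false
  have herase : ∀ j ∈ S, clo C (S.erase j) j = false := by
    intro j hj
    cases hcj : clo C (S.erase j) j with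
    | false => rfl
    | true =>
      exfalso
      apply hmin j hj
      have hsub : ∀ k ∈ S.erase j, v k = true := fun k hk => hSones k (Finset.mem_of_mem_erase hk)
      have hmemC : clo C (S.erase j) ∈ C := clo_mem hic hv hsub
      -- ones of clo (S.erase j) contain all of S
      have hSin : ∀ k ∈ S, clo C (S.erase j) k = true := by
        intro k hk
        by_cases hkj : k = j
        · rwa [hkj]
        · exact clo_self (Finset.mem_erase.mpr ⟨hkj, hk⟩)
      funext i
      cases hvi : v i with
      | true =>
        -- v = clo S ≤ clo (S.erase j) since the latter is in C with ones ⊇ S... reversed: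
        -- clo S i = true → any w ∈ C containing S has w i = true; here w := clo (S.erase j)
        have : clo C S i = true := by rw [hSspan, hvi]
        exact clo_le hmemC hSin i this
      | false =>
        -- clo (S.erase j) ≤ clo S = v pointwise
        cases hci : clo C (S.erase j) i with
        | false => rfl
        | true =>
          exfalso
          have : clo C S i = true := clo_mono (Finset.erase_subset j S) i hci
          rw [hSspan, hvi] at this
          exact Bool.false_ne_true this
  -- shattering
  rw [Shatters, Set.eq_univ_iff_forall]
  intro b
  set T : Finset (Fin n) :=
    (Finset.univ.filter (fun j : {i // i ∈ S} => b j = true)).image Subtype.val with hT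
  have hTS : T ⊆ S := by
    intro x hx
    simp only [hT, Finset.mem_image, Finset.mem_filter] at hx
    obtain ⟨⟨y, hy⟩, _, rfl⟩ := hx
    exact hy
  have hTones : ∀ j ∈ T, v j = true := fun j hj => hSones j (hTS hj)
  refine ⟨clo C T, clo_mem hic hv hTones, ?_⟩
  funext j
  simp only [proj]
  cases hb : b j with
  | true =>
    have : j.1 ∈ T := by
      simp only [hT, Finset.mem_image, Finset.mem_filter]
      exact ⟨j, ⟨Finset.mem_univ _, hb⟩, rfl⟩
    exact clo_self this
  | false =>
    -- T ⊆ S.erase j.1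
    have hTe : T ⊆ S.erase j.1 := by
      intro x hx
      refine Finset.mem_erase.mpr ⟨?_, hTS hx⟩
      intro hxj
      simp only [hT, Finset.mem_image, Finset.mem_filter] at hx
      obtain ⟨⟨y, hy⟩, ⟨_, hby⟩, rfl⟩ := hx
      have : (⟨y, hy⟩ : {i // i ∈ S}) = j := Subtype.ext hxj
      rw [this, hb] at hby
      exact Bool.false_ne_true hby
    cases hcj : clo C T j.1 with
    | false => rfl
    | true =>
      exfalso
      have := clo_mono hTe j.1 hcj
      rw [herase j.1 j.2] at this
      exact Bool.false_ne_true this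

/-- Cardinality of a shattered set is at most the VC dimension. -/
lemma card_le_VCdim {C : Set (Fin n → Bool)} {S : Finset (Fin n)} (hS : Shatters C S) :
    S.card ≤ VCdim C := by
  apply le_csSup
  · refine ⟨n, ?_⟩
    rintro k ⟨I, rfl, -⟩
    calc I.card ≤ Finset.univ.card := Finset.card_le_univ I
    _ = n := by simp
  · exact ⟨S, rfl, hS⟩

end Aux

/-- Every intersection-closed class of VC dimension `d` admits an
unlabelled compression scheme of size at most `11 d`. -/
theorem intersectionClosed_compression (C : Set (Fin n → Bool)) (d : ℕ)
    (hic : IntersectionClosed C) (hd : VCdim C = d) :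
    HasCompression C (11 * d) := by
  classical
  -- choose a minimal (shattered) spanning set for each element of C
  choose! S hSspan hSshat using fun v (hv : v ∈ C) => exists_spanning hic hv
  refine ⟨fun v => if h : v ∈ C then S v else ∅, ?_, ?_, ?_⟩
  · -- injectivity
    intro v hv w hw hvw
    simp only [dif_pos hv, dif_pos hw] at hvw
    rw [← hSspan v hv, ← hSspan w hw, hvw]
  · -- cardinality bound
    intro v hv
    simp only [dif_pos hv]
    have h1 : (S v).card ≤ VCdim C := card_le_VCdim (hSshat v hv)
    have h2 : d ≤ 11 * d := Nat.le_mul_of_pos_left d (by norm_num)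
    omega
  · -- separation
    intro v hv w hw hne
    by_contra hcon
    push_neg at hcon
    simp only [dif_pos hv, dif_pos hw] at hcon
    apply hne
    have hvones : ∀ j ∈ S v, v j = true := fun j hj => by
      rw [← hSspan v hv]; exact clo_self hj
    have hwones : ∀ j ∈ S w, w j = true := fun j hj => by
      rw [← hSspan w hw]; exact clo_self hj
    -- v and w agree on S v ∪ S w, so each contains the other's spanning set
    have hvw : ∀ j ∈ S v, w j = true := by
      intro j hj
      have := hcon j (Finset.mem_union_left _ hj)
      rw [← this]; exact hvones j hj
    have hwv : ∀ j ∈ S w, v j = true := by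
      intro j hj
      have := hcon j (Finset.mem_union_right _ hj)
      rw [this]; exact hwones j hj
    funext i
    cases hvi : v i with
    | true =>
      have : clo C (S v) i = true := by rw [hSspan v hv, hvi]
      exact (clo_le hw hvw i this).symm
    | false =>
      cases hwi : w i with
      | false => rfl
      | true =>
        exfalso
        have : clo C (S w) i = true := by rw [hSspan w hw, hwi]
        have := clo_le hv hwv i this
        rw [hvi] at this
        exact Bool.false_ne_true this
end

section
/- Let D ⊊ C ⊆ {0,1}^n be extremal concept classes satisfying the cubical colour condition. If c* is a maximal cube of the complement class {0,1}^n ∖ D of dimension d* that intersects C, then there exists a maximal cube c of C, not contained in D, of dimension n − d*, such that c ∩ c* consists of a single vertex. -/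
variable {n : ℕ}

private lemma bool_ne_iff' {x y : Bool} (h : x ≠ y) : x = !y := by
  cases x <;> cases y <;> simp_all

lemma shatters_iff (C : Set (Fin n → Bool)) (J : Finset (Fin n)) :
    Shatters C J ↔ ∀ f : Fin n → Bool, ∃ v ∈ C, ∀ i ∈ J, v i = f i := by
  constructor
  · intro h f
    have hf : proj J f ∈ proj J '' C := by rw [h]; trivial
    obtain ⟨v, hv, hvf⟩ := hf
    exact ⟨v, hv, fun i hi => congrFun hvf ⟨i, hi⟩⟩
  · intro h
    apply Set.eq_univ_of_forall
    intro g
    obtain ⟨v, hv, hvf⟩ := h (fun i => if hi : i ∈ J then g ⟨i, hi⟩ else false)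
    refine ⟨v, hv, funext fun j => ?_⟩
    obtain ⟨i, hi⟩ := j
    simpa [proj, hi] using hvf i hi

lemma extremal_fiber {E : Set (Fin n → Bool)} (hE : Extremal E) (k : Fin n) (ε : Bool) :
    Extremal {v | v ∈ E ∧ v k = ε} := by
  intro J hsh
  have hkJ : k ∉ J := by
    intro hk
    obtain ⟨v, hv, hvf⟩ := (shatters_iff _ J).1 hsh (fun _ => !ε)
    have h1 := hvf k hk
    rw [hv.2] at h1
    exact Bool.not_ne_self ε h1.symm
  have hshE : Shatters E J := by
    rw [shatters_iff] at hsh ⊢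
    intro f; obtain ⟨v, hv, hvf⟩ := hsh f; exact ⟨v, hv.1, hvf⟩
  obtain ⟨c1, ⟨a1, ha1⟩, hc1E⟩ := hE J hshE
  by_cases ha : a1 k = ε
  · refine ⟨c1, ⟨a1, ha1⟩, fun v hv => ⟨hc1E hv, ?_⟩⟩
    rw [ha1] at hv
    rw [hv k hkJ, ha]
  · have ha' : a1 k = !ε := bool_ne_iff' ha
    have hsh2 : Shatters E (insert k J) := by
      rw [shatters_iff]
      intro f
      by_cases hf : f k = ε
      · obtain ⟨v, hv, hvf⟩ := (shatters_iff _ _).1 hsh f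
        refine ⟨v, hv.1, fun i hi => ?_⟩
        rcases Finset.mem_insert.1 hi with h | h
        · subst h; rw [hv.2, hf]
        · exact hvf i h
      · refine ⟨fun i => if i ∈ J then f i else a1 i, ?_, ?_⟩
        · apply hc1E; rw [ha1]; intro i hi; simp [hi]
        · intro i hi
          rcases Finset.mem_insert.1 hi with h | h
          · subst h
            simp only [if_neg hkJ]
            rw [ha', bool_ne_iff' hf]
          · simp [h]
    obtain ⟨c2, ⟨a2, ha2⟩, hc2E⟩ := hE (insert k J) hsh2
    refine ⟨{v | ∀ i, i ∉ J → v i = Function.update a2 k ε i}, ⟨_, rfl⟩, ?_⟩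
    intro v hv
    have hvk : v k = ε := by
      have := hv k hkJ
      rwa [Function.update_self] at this
    refine ⟨?_, hvk⟩
    apply hc2E; rw [ha2]; intro i hi
    have hiJ : i ∉ J := fun h => hi (Finset.mem_insert_of_mem h)
    have hik : i ≠ k := fun h => hi (h ▸ Finset.mem_insert_self k J)
    rw [hv i hiJ, Function.update_of_ne hik]

lemma extremal_compl {A : Set (Fin n → Bool)} (hA : Extremal A) : Extremal Aᶜ := by
  intro J hsh
  by_contra hno
  push_neg at hno
  have hshc : Shatters A Jᶜ := by
    rw [shatters_iff]
    intro f
    have h1 := hno {v | ∀ i, i ∉ J → v i = f i} ⟨f, rfl⟩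
    rw [Set.not_subset] at h1
    obtain ⟨v, hv1, hv2⟩ := h1
    exact ⟨v, Set.notMem_compl_iff.1 hv2, fun i hi => hv1 i (Finset.mem_compl.1 hi)⟩
  obtain ⟨c', ⟨t, ht⟩, hc'A⟩ := hA Jᶜ hshc
  obtain ⟨w, hw, hwf⟩ := (shatters_iff _ _).1 hsh t
  apply hw
  apply hc'A
  rw [ht]
  intro i hi
  exact hwf i (by simpa using hi)

lemma extremal_cyl {D : Set (Fin n → Bool)} (hD : Extremal D) (I : Finset (Fin n)) :
    Extremal {v : Fin n → Bool | ∃ d ∈ D, ∀ i ∈ I, v i = d i} := by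
  intro J hsh
  have hshD : Shatters D (J ∩ I) := by
    rw [shatters_iff]
    intro f
    obtain ⟨v, ⟨d, hd, hdv⟩, hvf⟩ := (shatters_iff _ _).1 hsh f
    refine ⟨d, hd, fun i hi => ?_⟩
    have h1 := Finset.mem_inter.1 hi
    rw [← hdv i h1.2, hvf i h1.1]
  obtain ⟨cD, ⟨α, hα⟩, hcD⟩ := hD _ hshD
  refine ⟨{v | ∀ i, i ∉ J → v i = α i}, ⟨α, rfl⟩, ?_⟩
  intro v hv
  refine ⟨fun i => if i ∈ J ∩ I then v i else α i, ?_, ?_⟩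
  · apply hcD; rw [hα]; intro i hi; simp [hi]
  · intro i hiI
    by_cases hiJ : i ∈ J
    · simp [Finset.mem_inter.2 ⟨hiJ, hiI⟩]
    · have h2 : i ∉ J ∩ I := fun h => hiJ (Finset.mem_inter.1 h).1
      simp only [if_neg h2]
      exact hv i hiJ

lemma cube_step (I : Finset (Fin n)) (b : Fin n → Bool) :
    ∀ (m : ℕ) (E : Set (Fin n → Bool)), E.ncard ≤ m → Extremal E →
    (∀ v ∈ E, ∀ w : Fin n → Bool, (∀ i ∈ I, w i = v i) → w ∈ E) →
    {v : Fin n → Bool | ∀ i ∈ I, v i = b i} ⊆ E →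
    ∀ z ∈ E, ∀ k ∈ I, z k ≠ b k →
    ∃ i ∈ I, {v : Fin n → Bool | ∀ j ∈ I, v j = Function.update b i (!b i) j} ⊆ E := by
  intro m
  induction m with
  | zero =>
    intro E hcard hE hcyl hcb z hz k hk hzk
    exfalso
    have hbE : b ∈ E := hcb (fun i _ => rfl)
    have h0 : E.ncard = 0 := Nat.le_zero.1 hcard
    rw [Set.ncard_eq_zero (Set.toFinite E)] at h0
    rw [h0] at hbE
    exact hbE
  | succ m ih =>
    intro E hcard hE hcyl hcb z hz k hk hzk
    have hbE : b ∈ E := hcb (fun i _ => rfl)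
    have hshk : Shatters E {k} := by
      rw [shatters_iff]
      intro f
      by_cases hf : f k = b k
      · exact ⟨b, hbE, fun i hi => by rw [Finset.mem_singleton.1 hi, hf]⟩
      · refine ⟨z, hz, fun i hi => ?_⟩
        rw [Finset.mem_singleton.1 hi, bool_ne_iff' hzk, bool_ne_iff' hf]
    obtain ⟨c1, ⟨a, ha⟩, hc1⟩ := hE {k} hshk
    set e' : Fin n → Bool := fun i => if i = k then b k else a i with he'
    have he'c : e' ∈ E := by
      apply hc1; rw [ha]; intro i hi
      have hik : i ≠ k := by simpa using hi
      simp [he', hik]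
    have he''c : Function.update e' k (!b k) ∈ E := by
      apply hc1; rw [ha]; intro i hi
      have hik : i ≠ k := by simpa using hi
      rw [Function.update_of_ne hik]
      simp [he', hik]
    by_cases hcase : ∀ i ∈ I, e' i = b i
    · refine ⟨k, hk, ?_⟩
      intro v hv
      apply hcyl _ he''c v
      intro i hi
      by_cases hik : i = k
      · subst hik
        rw [hv i hi, Function.update_self, Function.update_self]
      · rw [hv i hi, Function.update_of_ne hik, Function.update_of_ne hik]
        exact (hcase i hi).symm
    · push_neg at hcase
      obtain ⟨i0, hi0I, hi0⟩ := hcase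
      have hF : Extremal {v | v ∈ E ∧ v k = b k} := extremal_fiber hE k (b k)
      have hcylF : ∀ v ∈ {v : Fin n → Bool | v ∈ E ∧ v k = b k},
          ∀ w : Fin n → Bool, (∀ i ∈ I, w i = v i) →
          w ∈ {v : Fin n → Bool | v ∈ E ∧ v k = b k} :=
        fun v hv w hw => ⟨hcyl v hv.1 w hw, by rw [hw k hk, hv.2]⟩
      have hcbF : {v : Fin n → Bool | ∀ i ∈ I, v i = b i} ⊆
          {v : Fin n → Bool | v ∈ E ∧ v k = b k} :=
        fun v hv => ⟨hcb hv, hv k hk⟩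
      have hcardF : ({v : Fin n → Bool | v ∈ E ∧ v k = b k}).ncard ≤ m := by
        have hss : {v : Fin n → Bool | v ∈ E ∧ v k = b k} ⊂ E := by
          constructor
          · exact fun v hv => hv.1
          · intro h
            exact hzk (h hz).2
        have hlt := Set.ncard_lt_ncard hss (Set.toFinite E)
        exact Nat.le_of_lt_succ (lt_of_lt_of_le hlt hcard)
      have he'F : e' ∈ {v : Fin n → Bool | v ∈ E ∧ v k = b k} := ⟨he'c, by simp [he']⟩
      obtain ⟨i, hiI, hsubF⟩ := ih _ hcardF hF hcylF hcbF e' he'F i0 hi0I hi0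
      exact ⟨i, hiI, fun v hv => (hsubF hv).1⟩
/-- For a proper pair `(C, D)` of extremal classes satisfying the
cubical colour condition, every maximal cube `c*` of the complement class
`{0,1}ⁿ ∖ D` that intersects `C` has a complementary maximal cube `c` of `C` not
contained in `D`. -/
theorem exists_complementary_maximal_cube_converse (C D : Set (Fin n → Bool))
    (hC : Extremal C) (hD : Extremal D) (hsub : D ⊂ C) (hccc : CCC C D)
    (cstar : Set (Fin n → Bool)) (Istar : Finset (Fin n)) (hcI : IsCubeOn Istar cstar)
    (hmax : MaximalCubeIn Dᶜ cstar) (hmeet : (cstar ∩ C).Nonempty) :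
    ∃ (I : Finset (Fin n)) (c : Set (Fin n → Bool)), IsCubeOn I c ∧
      MaximalCubeIn C c ∧ ¬ c ⊆ D ∧ I.card + Istar.card = n ∧
      ∃ v, c ∩ cstar = {v} := by
  obtain ⟨astar, hastar⟩ := hcI
  obtain ⟨hcubestar, hsubDc, hmaxp⟩ := hmax
  obtain ⟨u, hu_cstar, hu_C⟩ := hmeet
  set I : Finset (Fin n) := Istarᶜ with hI
  have hmemI : ∀ i : Fin n, i ∈ I ↔ i ∉ Istar := fun i => Finset.mem_compl
  have hmem_cstar : ∀ v : Fin n → Bool, v ∈ cstar ↔ ∀ i ∈ I, v i = astar i := by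
    intro v
    rw [hastar]
    constructor
    · intro h i hi; exact h i ((hmemI i).1 hi)
    · intro h i hi; exact h i ((hmemI i).2 hi)
  -- Step S1: for each i ∈ I, a point of D agreeing with astar on I except flipped at i
  have S1 : ∀ i ∈ I, ∃ d ∈ D, (∀ j ∈ I, j ≠ i → d j = astar j) ∧ d i = !astar i := by
    intro i hiI
    have hiIstar : i ∉ Istar := (hmemI i).1 hiI
    have hsub2 : cstar ⊆ {v : Fin n → Bool | ∀ j, j ∉ insert i Istar → v j = astar j} := by
      rw [hastar]
      intro v hv j hj
      exact hv j (fun h => hj (Finset.mem_insert_of_mem h))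
    have hne : {v : Fin n → Bool | ∀ j, j ∉ insert i Istar → v j = astar j} ≠ cstar := by
      intro heq
      have hw : Function.update astar i (!astar i) ∈
          {v : Fin n → Bool | ∀ j, j ∉ insert i Istar → v j = astar j} := by
        intro j hj
        have hji : j ≠ i := fun h => hj (h ▸ Finset.mem_insert_self i Istar)
        rw [Function.update_of_ne hji]
      rw [heq, hastar] at hw
      have h1 := hw i hiIstar
      rw [Function.update_self] at h1
      exact Bool.not_ne_self (astar i) h1
    have hnsub : ¬ {v : Fin n → Bool | ∀ j, j ∉ insert i Istar → v j = astar j} ⊆ Dᶜ :=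
      fun h => hne (hmaxp _ ⟨insert i Istar, astar, rfl⟩ h hsub2)
    rw [Set.not_subset] at hnsub
    obtain ⟨d, hd1, hd2⟩ := hnsub
    have hdD : d ∈ D := Set.notMem_compl_iff.1 hd2
    have hdagree : ∀ j ∈ I, j ≠ i → d j = astar j := by
      intro j hjI hji
      apply hd1
      simp [Finset.mem_insert, hji, (hmemI j).1 hjI]
    refine ⟨d, hdD, hdagree, ?_⟩
    have hdnc : d ∉ cstar := fun h => (hsubDc h) hdD
    rw [hmem_cstar] at hdnc
    push_neg at hdnc
    obtain ⟨j, hj, hjne⟩ := hdnc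
    have hji : j = i := by
      by_contra hji
      exact hjne (hdagree j hj hji)
    subst hji
    exact bool_ne_iff' hjne
  -- the cylinder over proj_I D and its complement
  set A : Set (Fin n → Bool) := {v | ∃ d ∈ D, ∀ i ∈ I, v i = d i} with hA
  have hAex : Extremal A := extremal_cyl hD I
  have hEex : Extremal Aᶜ := extremal_compl hAex
  have hcylE : ∀ v ∈ Aᶜ, ∀ w : Fin n → Bool, (∀ i ∈ I, w i = v i) → w ∈ Aᶜ := by
    intro v hv w hw
    simp only [Set.mem_compl_iff] at hv ⊢
    intro hwA
    apply hv
    obtain ⟨d, hd, hdw⟩ := hwA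
    exact ⟨d, hd, fun i hi => by rw [← hw i hi]; exact hdw i hi⟩
  have hcstarE : cstar ⊆ Aᶜ := by
    intro v hv hvA
    obtain ⟨d, hd, hdv⟩ := hvA
    have hdc : d ∈ cstar := by
      rw [hmem_cstar]
      intro i hi
      rw [← hdv i hi]
      exact (hmem_cstar v).1 hv i hi
    exact (hsubDc hdc) hd
  have hEc : Aᶜ ⊆ cstar := by
    intro z hz
    by_contra hznot
    rw [hmem_cstar] at hznot
    push_neg at hznot
    obtain ⟨k, hk, hzk⟩ := hznot
    have hcb : {v : Fin n → Bool | ∀ i ∈ I, v i = astar i} ⊆ Aᶜ :=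
      fun v hv => hcstarE ((hmem_cstar v).2 hv)
    obtain ⟨i, hiI, hflip⟩ :=
      cube_step I astar (Aᶜ).ncard Aᶜ le_rfl hEex hcylE hcb z hz k hk hzk
    obtain ⟨d, hdD, hdagree, hdflip⟩ := S1 i hiI
    have hdA : d ∈ A := ⟨d, hdD, fun _ _ => rfl⟩
    have hdflipcube : d ∈ {v : Fin n → Bool | ∀ j ∈ I,
        v j = Function.update astar i (!astar i) j} := by
      intro j hj
      by_cases hji : j = i
      · subst hji; rw [Function.update_self]; exact hdflip
      · rw [Function.update_of_ne hji]; exact hdagree j hj hji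
    exact (hflip hdflipcube) hdA
  -- C shatters I
  have hshC : Shatters C I := by
    rw [shatters_iff]
    intro f
    by_cases hf : ∀ i ∈ I, f i = astar i
    · refine ⟨u, hu_C, fun i hi => ?_⟩
      rw [(hmem_cstar u).1 hu_cstar i hi, ← hf i hi]
    · have hfA : f ∈ A := by
        by_contra hfA
        have hfc : f ∈ cstar := hEc hfA
        exact hf (fun i hi => (hmem_cstar f).1 hfc i hi)
      obtain ⟨d, hdD, hdf⟩ := hfA
      exact ⟨d, hsub.1 hdD, fun i hi => (hdf i hi).symm⟩
  obtain ⟨c, hcOn, hcC⟩ := hC I hshC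
  -- any cube with colour set I meets cstar in exactly one vertex
  have hsingle : ∀ c' : Set (Fin n → Bool), IsCubeOn I c' → ∃ w, c' ∩ cstar = {w} := by
    intro c' hc'
    obtain ⟨ac, hac⟩ := hc'
    refine ⟨fun i => if i ∈ Istar then ac i else astar i, ?_⟩
    ext v
    simp only [Set.mem_inter_iff, Set.mem_singleton_iff]
    constructor
    · rintro ⟨h1, h2⟩
      funext i
      by_cases hi : i ∈ Istar
      · rw [hac] at h1
        simp only [if_pos hi]
        exact h1 i (fun h => ((hmemI i).1 h) hi)
      · rw [hastar] at h2
        simp only [if_neg hi]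
        exact h2 i hi
    · intro h
      subst h
      constructor
      · rw [hac]
        intro i hi
        have hiIstar : i ∈ Istar := by
          by_contra h2
          exact hi ((hmemI i).2 h2)
        simp [hiIstar]
      · rw [hastar]
        intro i hi
        simp [hi]
  -- no cube with colour set I is contained in D
  have hnoD : ∀ c' : Set (Fin n → Bool), IsCubeOn I c' → ¬ c' ⊆ D := by
    intro c' hc' hsubD
    obtain ⟨w, hw⟩ := hsingle c' hc'
    have hw1 : w ∈ c' ∩ cstar := by rw [hw]; rfl
    exact (hsubDc hw1.2) (hsubD hw1.1)
  have hmaxc : MaximalCubeIn C c := by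
    by_contra hnm
    obtain ⟨c'', hc''On, hc''D⟩ := hccc I c hcOn hcC hnm
    exact hnoD c'' hc''On hc''D
  have hcard : I.card + Istar.card = n := by
    have h1 : I.card = Fintype.card (Fin n) - Istar.card := Finset.card_compl Istar
    have h2 : Istar.card ≤ Fintype.card (Fin n) := Finset.card_le_univ Istar
    rw [Fintype.card_fin] at h1 h2
    omega
  exact ⟨I, c, hcOn, hmaxc, hnoD c hcOn, hcard, hsingle c hcOn⟩
end

section
/- Let D ⊊ C ⊆ {0,1}^n be extremal concept classes satisfying the cubical colour condition. Then a maximal cube c* of the complement class {0,1}^n ∖ D cannot be complementary to two distinct maximal cubes of C not contained in D; that is, if c and c' are maximal cubes of C not contained in D with dim c + dim c* = n = dim c' + dim c*, and both c ∩ c* and c' ∩ c* are single vertices, then c = c'. -/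
variable {n : ℕ}

lemma cube_inter_singleton_disjoint {n : ℕ} {J K : Finset (Fin n)} {b bs u : Fin n → Bool}
    (h : {w : Fin n → Bool | ∀ i, i ∉ J → w i = b i} ∩
        {w : Fin n → Bool | ∀ i, i ∉ K → w i = bs i} = {u}) :
    Disjoint J K := by
  classical
  rw [Finset.disjoint_left]
  intro i hiJ hiK
  have hu : u ∈ ({w : Fin n → Bool | ∀ i, i ∉ J → w i = b i} ∩
      {w : Fin n → Bool | ∀ i, i ∉ K → w i = bs i}) := by rw [h]; rfl
  have h2 : Function.update u i (!u i) ∈ ({w : Fin n → Bool | ∀ i, i ∉ J → w i = b i} ∩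
      {w : Fin n → Bool | ∀ i, i ∉ K → w i = bs i}) := by
    constructor
    · intro k hk
      rw [Function.update_of_ne (by rintro rfl; exact hk hiJ)]
      exact hu.1 k hk
    · intro k hk
      rw [Function.update_of_ne (by rintro rfl; exact hk hiK)]
      exact hu.2 k hk
  rw [h] at h2
  have h3 : Function.update u i (!u i) = u := h2
  have := congrFun h3 i
  simp [Function.update_self] at this

/-- For a proper pair `(C, D)` of extremal classes satisfying the
cubical colour condition, a maximal cube of the complement class `{0,1}ⁿ ∖ D` cannot
be complementary to two distinct maximal cubes of `C` not contained in `D`. -/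
theorem complementary_maximal_cube_unique (C D : Set (Fin n → Bool))
    (hC : Extremal C) (hD : Extremal D) (hsub : D ⊂ C) (hccc : CCC C D)
    (cstar : Set (Fin n → Bool)) (Istar : Finset (Fin n)) (hcIstar : IsCubeOn Istar cstar)
    (hmaxstar : MaximalCubeIn Dᶜ cstar)
    (c c' : Set (Fin n → Bool)) (I I' : Finset (Fin n))
    (hcI : IsCubeOn I c) (hcI' : IsCubeOn I' c')
    (hmax : MaximalCubeIn C c) (hmax' : MaximalCubeIn C c')
    (hnotD : ¬ c ⊆ D) (hnotD' : ¬ c' ⊆ D)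
    (hdim : I.card + Istar.card = n) (hdim' : I'.card + Istar.card = n)
    (hint : ∃ v, c ∩ cstar = {v}) (hint' : ∃ v, c' ∩ cstar = {v}) :
    c = c' := by
  classical
  by_contra hne
  obtain ⟨a, rfl⟩ := hcI
  obtain ⟨a', rfl⟩ := hcI'
  obtain ⟨astar, rfl⟩ := hcIstar
  obtain ⟨v, hv⟩ := hint
  obtain ⟨v', hv'⟩ := hint'
  have hdisjI : Disjoint I Istar := cube_inter_singleton_disjoint hv
  have hdisjI' : Disjoint I' Istar := cube_inter_singleton_disjoint hv'
  have hIstarcard : Istar.card ≤ n := by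
    simpa using Finset.card_le_card (Finset.subset_univ Istar)
  have hIeq : I = Finset.univ \ Istar := by
    apply Finset.eq_of_subset_of_card_le
    · intro i hi
      simp only [Finset.mem_sdiff, Finset.mem_univ, true_and]
      exact fun h => Finset.disjoint_left.mp hdisjI hi h
    · rw [Finset.card_sdiff_of_subset (Finset.subset_univ _)]
      simp only [Finset.card_univ, Fintype.card_fin]
      omega
  have hI'eq : I' = Finset.univ \ Istar := by
    apply Finset.eq_of_subset_of_card_le
    · intro i hi
      simp only [Finset.mem_sdiff, Finset.mem_univ, true_and]
      exact fun h => Finset.disjoint_left.mp hdisjI' hi h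
    · rw [Finset.card_sdiff_of_subset (Finset.subset_univ _)]
      simp only [Finset.card_univ, Fintype.card_fin]
      omega
  have hII' : I = I' := by rw [hI'eq, hIeq]
  subst hII'
  -- a cube anchor coordinate where c and c' differ
  have hex : ∃ j, j ∉ I ∧ a j ≠ a' j := by
    by_contra h
    push_neg at h
    apply hne
    ext w
    simp only [Set.mem_setOf_eq]
    constructor <;> intro hw i hi
    · rw [← h i hi]; exact hw i hi
    · rw [h i hi]; exact hw i hi
  obtain ⟨j, hjI, hja⟩ := hex
  have hjmem : j ∈ insert j I := Finset.mem_insert_self j I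
  -- C shatters I ∪ {j}
  have hshat : Shatters C (insert j I) := by
    rw [Shatters, Set.eq_univ_iff_forall]
    intro x
    by_cases hx : x ⟨j, hjmem⟩ = a j
    · refine ⟨fun i => if h : i ∈ insert j I then x ⟨i, h⟩ else a i, hmax.2.1 ?_, ?_⟩
      · intro i hi
        by_cases hij : i = j
        · subst hij
          simp only [dif_pos hjmem]
          exact hx
        · simp only [dif_neg (show i ∉ insert j I by simp [Finset.mem_insert, hij, hi])]
      · funext k
        exact dif_pos k.2
    · have hx' : x ⟨j, hjmem⟩ = a' j := by
        cases hxa : x ⟨j, hjmem⟩ <;> cases haj : a j <;> cases ha'j : a' j <;> simp_all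
      refine ⟨fun i => if h : i ∈ insert j I then x ⟨i, h⟩ else a' i, hmax'.2.1 ?_, ?_⟩
      · intro i hi
        by_cases hij : i = j
        · subst hij
          simp only [dif_pos hjmem]
          exact hx'
        · simp only [dif_neg (show i ∉ insert j I by simp [Finset.mem_insert, hij, hi])]
      · funext k
        exact dif_pos k.2
  obtain ⟨b, ⟨ab, rfl⟩, hbC⟩ := hC _ hshat
  set ea : Fin n → Bool := Function.update ab j true with hea
  set e : Set (Fin n → Bool) := {w | ∀ i, i ∉ I → w i = ea i} with he
  have hsube : e ⊆ {w | ∀ i, i ∉ insert j I → w i = ab i} := by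
    intro w hw i hi
    have hij : i ≠ j := by rintro rfl; exact hi hjmem
    have hiI : i ∉ I := fun h => hi (Finset.mem_insert_of_mem h)
    rw [hw i hiI, hea, Function.update_of_ne hij]
  have heC : e ⊆ C := hsube.trans hbC
  have hnm : ¬ MaximalCubeIn C e := by
    intro hm
    have heb := hm.2.2 _ ⟨insert j I, ab, rfl⟩ hbC hsube
    have hw0 : Function.update ea j false ∈ {w | ∀ i, i ∉ insert j I → w i = ab i} := by
      intro i hi
      have hij : i ≠ j := by rintro rfl; exact hi hjmem
      rw [Function.update_of_ne hij, hea, Function.update_of_ne hij]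
    rw [heb] at hw0
    have := hw0 j hjI
    simp [hea, Function.update_self] at this
  obtain ⟨d, ⟨ad, rfl⟩, hdD⟩ := hccc I e ⟨ea, rfl⟩ heC hnm
  set w : Fin n → Bool := fun i => if i ∈ I then astar i else ad i with hwdef
  have hwD : w ∈ D := hdD (by intro i hi; simp [hwdef, hi])
  have hwcs : w ∈ {u : Fin n → Bool | ∀ i, i ∉ Istar → u i = astar i} := by
    intro i hi
    have hiI : i ∈ I := by rw [hIeq]; simp [hi]
    simp [hwdef, hiI]
  exact hmaxstar.2.1 hwcs hwD
end

section
/- Let D ⊊ C ⊆ {0,1}^n be extremal concept classes satisfying the cubical colour condition. Then for every maximal cube c of C not contained in D, with colour set I, the projection p_I(D) equals {0,1}^I with exactly one vertex removed. -/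
variable {n : ℕ}

namespace PT15
variable {n : ℕ}
def Cube (I : Finset (Fin n)) (a : Fin n → Bool) : Set (Fin n → Bool) :=
  {v | ∀ i, i ∉ I → v i = a i}

lemma self_mem_cube {I : Finset (Fin n)} {a : Fin n → Bool} : a ∈ Cube I a :=
  fun _ _ => rfl

lemma cube_congr {I : Finset (Fin n)} {a a' : Fin n → Bool}
    (h : ∀ k, k ∉ I → a k = a' k) : Cube I a = Cube I a' := by
  ext v; constructor <;> intro hv i hi
  · rw [hv i hi]; exact h i hi
  · rw [hv i hi]; exact (h i hi).symm

def Sh (C : Set (Fin n → Bool)) (I : Finset (Fin n)) : Prop :=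
  ∀ u : Fin n → Bool, ∃ v ∈ C, ∀ i ∈ I, v i = u i
def Ext (C : Set (Fin n → Bool)) : Prop :=
  ∀ I, Sh C I → ∃ a, Cube I a ⊆ C
def mix (I : Finset (Fin n)) (u a : Fin n → Bool) : Fin n → Bool :=
  fun k => if k ∈ I then u k else a k
lemma mix_mem_cube {I : Finset (Fin n)} {u a : Fin n → Bool} :
    mix I u a ∈ Cube I a := fun _ hi => if_neg hi
lemma mix_pattern {I : Finset (Fin n)} {u a : Fin n → Bool} {i : Fin n} (hi : i ∈ I) :
    mix I u a i = u i := if_pos hi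
lemma notMem_of_sh_const {C : Set (Fin n → Bool)} {I : Finset (Fin n)} {i : Fin n}
    (h : Sh C I) (hc : ∀ v ∈ C, v i = false) : i ∉ I := by
  intro hi
  obtain ⟨v, hv, hmatch⟩ := h (fun _ => true)
  have := hmatch i hi
  rw [hc v hv] at this
  exact Bool.false_ne_true this
def Slice (i : Fin n) (b : Bool) (C : Set (Fin n → Bool)) : Set (Fin n → Bool) :=
  (fun v => Function.update v i false) '' {v ∈ C | v i = b}
def Inter (i : Fin n) (C : Set (Fin n → Bool)) : Set (Fin n → Bool) :=
  {x | x i = false ∧ ∀ b, Function.update x i b ∈ C}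
lemma slice_false_at {i : Fin n} {b : Bool} {C : Set (Fin n → Bool)} {x : Fin n → Bool}
    (hx : x ∈ Slice i b C) : x i = false := by
  obtain ⟨v, -, rfl⟩ := hx; simp
lemma mem_slice {i : Fin n} {b : Bool} {C : Set (Fin n → Bool)} {x : Fin n → Bool}
    (hxi : x i = false) (hx : Function.update x i b ∈ C) : x ∈ Slice i b C := by
  refine ⟨Function.update x i b, ⟨hx, by simp⟩, ?_⟩
  funext k
  by_cases hk : k = i
  · subst hk; simp [hxi]
  · simp [Function.update_of_ne hk]
lemma slice_elim {i : Fin n} {b : Bool} {C : Set (Fin n → Bool)} {x : Fin n → Bool}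
    (hx : x ∈ Slice i b C) : Function.update x i b ∈ C := by
  obtain ⟨v, ⟨hv, hvb⟩, rfl⟩ := hx
  have : Function.update (Function.update v i false) i b = v := by
    funext k
    by_cases hk : k = i
    · subst hk; simp [hvb]
    · simp [Function.update_of_ne hk]
  rw [this]; exact hv

-- NEW PART --

/-- Extremality passes to slices. -/
lemma ext_slice {C : Set (Fin n → Bool)} (hC : Ext C) (i : Fin n) (b : Bool) :
    Ext (Slice i b C) := by
  intro I hSh
  have hi : i ∉ I := notMem_of_sh_const hSh (fun v hv => slice_false_at hv)
  -- C shatters I as well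
  have hShC : Sh C I := by
    intro u
    obtain ⟨x, hx, hmatch⟩ := hSh u
    refine ⟨Function.update x i b, slice_elim hx, fun k hk => ?_⟩
    rw [Function.update_of_ne (show _ ≠ i from fun h => hi (h ▸ hk))]
    exact hmatch k hk
  obtain ⟨α, hα⟩ := hC I hShC
  by_cases hb : α i = b
  · -- the cube already sits in the slice
    refine ⟨Function.update α i false, fun v' hv' => ?_⟩
    have hv'i : v' i = false := by
      have := hv' i hi; simpa using this
    refine mem_slice hv'i (hα ?_)
    intro k hk
    by_cases hki : k = i
    · subst hki; simp [hb]
    · rw [Function.update_of_ne hki]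
      have := hv' k hk
      rwa [Function.update_of_ne hki] at this
  · -- α i = !b; combine with the slice to shatter insert i I
    have hb' : α i = !b := by
      cases hαi : α i <;> cases b <;> simp_all
    have hShBig : Sh C (insert i I) := by
      intro u
      by_cases hui : u i = b
      · obtain ⟨x, hx, hmatch⟩ := hSh u
        refine ⟨Function.update x i b, slice_elim hx, fun k hk => ?_⟩
        rcases Finset.mem_insert.1 hk with hk | hk
        · subst hk; simp [hui]
        · rw [Function.update_of_ne (show _ ≠ i from fun h => hi (h ▸ hk))]
          exact hmatch k hk
      · have hui' : u i = !b := by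
          cases hu : u i <;> cases b <;> simp_all
        refine ⟨mix I u α, hα mix_mem_cube, fun k hk => ?_⟩
        rcases Finset.mem_insert.1 hk with hk | hk
        · subst hk
          rw [show mix I u α k = α k from if_neg hi, hb', hui']
        · exact mix_pattern hk
    obtain ⟨β, hβ⟩ := hC _ hShBig
    refine ⟨Function.update β i false, fun v' hv' => ?_⟩
    have hv'i : v' i = false := by
      have := hv' i hi; simpa using this
    refine mem_slice hv'i (hβ ?_)
    intro k hk
    have hki : k ≠ i := fun h => hk (h ▸ Finset.mem_insert_self i I)
    have hkI : k ∉ I := fun h => hk (Finset.mem_insert_of_mem h)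
    rw [Function.update_of_ne hki]
    have := hv' k hkI
    rwa [Function.update_of_ne hki] at this

/-- Extremality passes to the intersection of the two slices. -/
lemma ext_inter {C : Set (Fin n → Bool)} (hC : Ext C) (i : Fin n) :
    Ext (Inter i C) := by
  intro I hSh
  have hi : i ∉ I := notMem_of_sh_const hSh (fun v hv => hv.1)
  have hShBig : Sh C (insert i I) := by
    intro u
    obtain ⟨x, hx, hmatch⟩ := hSh u
    refine ⟨Function.update x i (u i), hx.2 (u i), fun k hk => ?_⟩
    rcases Finset.mem_insert.1 hk with hk | hk
    · subst hk; simp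
    · rw [Function.update_of_ne (show _ ≠ i from fun h => hi (h ▸ hk))]
      exact hmatch k hk
  obtain ⟨β, hβ⟩ := hC _ hShBig
  refine ⟨Function.update β i false, fun v' hv' => ?_⟩
  have hv'i : v' i = false := by
    have := hv' i hi; simpa using this
  refine ⟨hv'i, fun b => hβ ?_⟩
  intro k hk
  have hki : k ≠ i := fun h => hk (h ▸ Finset.mem_insert_self i I)
  have hkI : k ∉ I := fun h => hk (Finset.mem_insert_of_mem h)
  rw [Function.update_of_ne hki]
  have := hv' k hkI
  rwa [Function.update_of_ne hki] at this


def Supp (s : Finset (Fin n)) (C : Set (Fin n → Bool)) : Prop :=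
  ∀ v ∈ C, ∀ k, k ∉ s → v k = false

lemma supp_slice {s : Finset (Fin n)} {C : Set (Fin n → Bool)} (h : Supp s C)
    (i : Fin n) (b : Bool) : Supp (s.erase i) (Slice i b C) := by
  rintro x ⟨v, ⟨hv, -⟩, rfl⟩ k hk
  show Function.update v i false k = false
  by_cases hki : k = i
  · subst hki; simp
  · rw [Function.update_of_ne hki]
    exact h v hv k (fun hks => hk (Finset.mem_erase.2 ⟨hki, hks⟩))

/-- In an extremal class, a vertex with no neighbours is the only vertex. -/
lemma iso (s : Finset (Fin n)) : ∀ (C : Set (Fin n → Bool)), Supp s C → Ext C →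
    ∀ a ∈ C, (∀ j, Function.update a j (!(a j)) ∉ C) → C = {a} := by
  induction s using Finset.induction_on with
  | empty =>
    intro C hsupp _ a ha _
    apply Set.eq_singleton_iff_unique_mem.2 ⟨ha, ?_⟩
    intro v hv
    funext k
    rw [hsupp v hv k (Finset.notMem_empty k), hsupp a ha k (Finset.notMem_empty k)]
  | @insert i t hi ih =>
    intro C hsupp hext a ha hiso
    set b := a i with hb
    set abar := Function.update a i false with habar
    have hupd_ab : Function.update abar i b = a := by
      funext k
      by_cases hk : k = i
      · subst hk; simp [hb]
      · simp [habar, Function.update_of_ne hk]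
    have habar_mem : abar ∈ Slice i b C := by
      refine mem_slice (by simp [habar]) ?_
      rw [hupd_ab]; exact ha
    have hsupp' : Supp t (Slice i b C) := by
      have := supp_slice hsupp i b
      rwa [Finset.erase_insert hi] at this
    have hext' : Ext (Slice i b C) := ext_slice hext i b
    have hiso' : ∀ j, Function.update abar j (!(abar j)) ∉ Slice i b C := by
      intro j hj
      by_cases hji : j = i
      · subst hji
        have := slice_false_at hj
        simp [habar] at this
      · have hmem := slice_elim hj
        have : Function.update (Function.update abar j (!(abar j))) i b
            = Function.update a j (!(a j)) := by
          funext k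
          by_cases hki : k = i
          · subst hki
            rw [Function.update_self, Function.update_of_ne (Ne.symm hji), hb]
          · rw [Function.update_of_ne hki]
            by_cases hkj : k = j
            · subst hkj
              rw [Function.update_self, Function.update_self, habar,
                Function.update_of_ne hji]
            · rw [Function.update_of_ne hkj, Function.update_of_ne hkj, habar,
                Function.update_of_ne hki]
        rw [this] at hmem
        exact hiso j hmem
    have hslice : Slice i b C = {abar} := ih _ hsupp' hext' abar habar_mem hiso'
    -- no vertex of C has i-th coordinate !b
    have hnot : ∀ v ∈ C, v i = b := by
      by_contra hcon
      push_neg at hcon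
      obtain ⟨y, hy, hyb⟩ := hcon
      have hyb' : y i = !b := Bool.eq_not_iff.mpr hyb
      have hShi : Sh C {i} := by
        intro u
        by_cases hui : u i = b
        · exact ⟨a, ha, fun k hk => by
            rw [Finset.mem_singleton] at hk; subst hk; rw [← hb, hui]⟩
        · have hui' : u i = !b := Bool.eq_not_iff.mpr hui
          exact ⟨y, hy, fun k hk => by
            rw [Finset.mem_singleton] at hk; subst hk; rw [hyb', hui']⟩
      obtain ⟨z, hz⟩ := hext {i} hShi
      have hzmem : ∀ c, Function.update z i c ∈ C := by
        intro c
        apply hz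
        intro k hk
        rw [Function.update_of_ne (show _ ≠ i from fun h => hk (by rw [h]; exact Finset.mem_singleton_self i))]
      have hzbar : Function.update z i false ∈ Slice i b C := by
        refine mem_slice (by simp) ?_
        rw [Function.update_idem]; exact hzmem b
      rw [hslice] at hzbar
      have : Function.update z i (!b) = Function.update a i (!(a i)) := by
        rw [← Function.update_idem (a := i) (v := false) (f := z), hzbar, habar,
          Function.update_idem, hb]
      exact hiso i (this ▸ hzmem (!b))
    -- hence C = {a}
    apply Set.eq_singleton_iff_unique_mem.2 ⟨ha, ?_⟩
    intro v hv
    have hvslice : Function.update v i false ∈ Slice i b C :=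
      mem_slice (by simp) (by rw [Function.update_idem, ← hnot v hv]; simpa using hv)
    rw [hslice, Set.mem_singleton_iff] at hvslice
    calc v = Function.update (Function.update v i false) i b := by
            funext k
            by_cases hk : k = i
            · subst hk; rw [Function.update_self, hnot v hv]
            · rw [Function.update_of_ne hk, Function.update_of_ne hk]
      _ = Function.update abar i b := by rw [hvslice]
      _ = a := hupd_ab


/-- The class of (normalized) anchors of cubes with colour set `I` inside `C`. -/
def Anchors (I : Finset (Fin n)) (C : Set (Fin n → Bool)) : Set (Fin n → Bool) :=
  {x | (∀ k ∈ I, x k = false) ∧ Cube I x ⊆ C}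

lemma anchors_empty (C : Set (Fin n → Bool)) : Anchors ∅ C = C := by
  ext x
  constructor
  · intro hx
    exact hx.2 (fun i _ => rfl)
  · intro hx
    refine ⟨fun k hk => absurd hk (Finset.notMem_empty k), fun v hv => ?_⟩
    have : v = x := funext fun k => hv k (Finset.notMem_empty k)
    rwa [this]

lemma anchors_insert {i : Fin n} {I : Finset (Fin n)} (hiI : i ∉ I)
    (C : Set (Fin n → Bool)) :
    Anchors (insert i I) C = Anchors I (Inter i C) := by
  ext x
  constructor
  · rintro ⟨hfalse, hcube⟩
    refine ⟨fun k hk => hfalse k (Finset.mem_insert_of_mem hk), fun v hv => ?_⟩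
    have hvi : v i = false := by
      rw [hv i hiI]; exact hfalse i (Finset.mem_insert_self i I)
    refine ⟨hvi, fun b => hcube ?_⟩
    intro k hk
    have hki : k ≠ i := fun h => hk (by rw [h]; exact Finset.mem_insert_self i I)
    have hkI : k ∉ I := fun h => hk (Finset.mem_insert_of_mem h)
    rw [Function.update_of_ne hki]
    exact hv k hkI
  · rintro ⟨hfalse, hcube⟩
    have hx : x ∈ Inter i C := hcube (fun k _ => rfl)
    refine ⟨?_, ?_⟩
    · intro k hk
      rcases Finset.mem_insert.1 hk with hk | hk
      · subst hk; exact hx.1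
      · exact hfalse k hk
    · intro v hv
      have hv' : Function.update v i false ∈ Inter i C := by
        apply hcube
        intro k hk
        by_cases hki : k = i
        · subst hki; rw [Function.update_self, hx.1]
        · rw [Function.update_of_ne hki]
          exact hv k (fun h => hk (Finset.mem_of_mem_insert_of_ne h hki))
      have := hv'.2 (v i)
      have hcollapse : Function.update (Function.update v i false) i (v i) = v := by
        funext k
        by_cases hki : k = i
        · subst hki; simp
        · simp [Function.update_of_ne hki]
      rwa [hcollapse] at this

lemma ext_anchors {C : Set (Fin n → Bool)} (hC : Ext C) (I : Finset (Fin n)) :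
    Ext (Anchors I C) := by
  induction I using Finset.induction_on generalizing C with
  | empty => rw [anchors_empty]; exact hC
  | @insert i I hiI ih =>
    rw [anchors_insert hiI]
    exact ih (ext_inter hC i)

lemma supp_anchors (I : Finset (Fin n)) (C : Set (Fin n → Bool)) :
    Supp (Finset.univ \ I) (Anchors I C) := by
  intro v hv k hk
  apply hv.1
  by_contra hkI
  exact hk (Finset.mem_sdiff.2 ⟨Finset.mem_univ k, hkI⟩)

/-- In an extremal class, a maximal cube is the unique cube with its colour set. -/
lemma cube_unique {C : Set (Fin n → Bool)} (hC : Ext C) {I : Finset (Fin n)}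
    {a a' : Fin n → Bool} (hmax : MaximalCubeIn C (Cube I a)) (h' : Cube I a' ⊆ C) :
    Cube I a' = Cube I a := by
  set abar := mix I (fun _ => false) a with habar
  set abar' := mix I (fun _ => false) a' with habar'
  have hcongr : Cube I abar = Cube I a := cube_congr (fun k hk => if_neg hk)
  have hcongr' : Cube I abar' = Cube I a' := cube_congr (fun k hk => if_neg hk)
  have hmemS : abar ∈ Anchors I C := by
    refine ⟨fun k hk => if_pos hk, ?_⟩
    rw [hcongr]; exact hmax.2.1
  have hmemS' : abar' ∈ Anchors I C := by
    refine ⟨fun k hk => if_pos hk, ?_⟩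
    rw [hcongr']; exact h'
  have hiso : ∀ j, Function.update abar j (!(abar j)) ∉ Anchors I C := by
    intro j hj
    by_cases hjI : j ∈ I
    · have h1 := hj.1 j hjI
      rw [Function.update_self] at h1
      have h2 : abar j = false := if_pos hjI
      rw [h2] at h1
      simp at h1
    · -- build the bigger cube, contradicting maximality
      have hbig : Cube (insert j I) abar ⊆ C := by
        intro v hv
        by_cases hvj : v j = abar j
        · apply hmax.2.1
          rw [← hcongr]
          intro k hk
          by_cases hkj : k = j
          · subst hkj; exact hvj
          · exact hv k (fun h => hk (Finset.mem_of_mem_insert_of_ne h hkj))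
        · have hvj' : v j = !(abar j) := Bool.eq_not_iff.mpr hvj
          apply hj.2
          intro k hk
          by_cases hkj : k = j
          · subst hkj; rw [hvj', Function.update_self]
          · rw [Function.update_of_ne hkj]
            exact hv k (fun h => hk (Finset.mem_of_mem_insert_of_ne h hkj))
      have hsub : Cube I a ⊆ Cube (insert j I) abar := by
        intro v hv k hk
        have hkI : k ∉ I := fun h => hk (Finset.mem_insert_of_mem h)
        rw [hv k hkI]
        exact (if_neg hkI).symm
      have heq : Cube (insert j I) abar = Cube I a :=
        hmax.2.2 _ ⟨insert j I, abar, rfl⟩ hbig hsub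
      have hx : Function.update abar j (!(abar j)) ∈ Cube (insert j I) abar := by
        intro k hk
        have hkj : k ≠ j := fun h => hk (by rw [h]; exact Finset.mem_insert_self j I)
        rw [Function.update_of_ne hkj]
      rw [heq, ← hcongr] at hx
      have := hx j hjI
      rw [Function.update_self] at this
      exact Bool.not_ne_self (abar j) this
  have hsingle : Anchors I C = {abar} :=
    iso (Finset.univ \ I) _ (supp_anchors I C) (ext_anchors hC I) abar hmemS hiso
  rw [hsingle, Set.mem_singleton_iff] at hmemS'
  rw [← hcongr, ← hcongr', hmemS']

/-- Bridge: the `Extremal` of the problem statement implies the internal `Ext`. -/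
lemma ext_of_extremal {C : Set (Fin n → Bool)} (hC : Extremal C) : Ext C := by
  intro I hSh
  have hshat : Shatters C I := by
    apply Set.eq_univ_of_forall
    intro z
    obtain ⟨v, hv, hmatch⟩ := hSh (fun k => if h : k ∈ I then z ⟨k, h⟩ else false)
    refine ⟨v, hv, funext fun j => ?_⟩
    show v j.1 = z j
    rw [hmatch j.1 j.2, dif_pos j.2]
  obtain ⟨c, ⟨a, rfl⟩, hsub⟩ := hC I hshat
  exact ⟨a, hsub⟩

end PT15

/-- For a proper pair `(C, D)` of extremal classes satisfying the
cubical colour condition, for every maximal cube `c` of `C` not contained in `D` with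
colour set `I`, the projection `p_I(D)` is the full cube `{0,1}^I` with exactly one
vertex removed. -/
theorem proj_of_D_misses_one_vertex (C D : Set (Fin n → Bool))
    (hC : Extremal C) (hD : Extremal D) (hsub : D ⊂ C) (hccc : CCC C D)
    (c : Set (Fin n → Bool)) (I : Finset (Fin n)) (hcI : IsCubeOn I c)
    (hmax : MaximalCubeIn C c) (hnotD : ¬ c ⊆ D) :
    ∃ w : {i // i ∈ I} → Bool, proj I '' D = {w}ᶜ := by
  obtain ⟨a, rfl⟩ := hcI
  have hDC : D ⊆ C := hsub.subset
  have hCext : PT15.Ext C := PT15.ext_of_extremal hC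
  have hmaxC : MaximalCubeIn C (PT15.Cube I a) := hmax
  -- step cubes: for each colour i ∈ I, the ccc provides a cube of colour I.erase i in D
  have hstep : ∀ i ∈ I, ∃ β : Fin n → Bool, PT15.Cube (I.erase i) β ⊆ D := by
    intro i hiI
    set ci := PT15.Cube (I.erase i) (Function.update a i false) with hci
    have hsubc : ci ⊆ PT15.Cube I a := by
      intro v hv k hk
      have hki : k ≠ i := by rintro rfl; exact hk hiI
      have := hv k (fun h => hk (Finset.mem_of_mem_erase h))
      rwa [Function.update_of_ne hki] at this
    have hne : PT15.Cube I a ≠ ci := by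
      intro h
      have hx : Function.update a i true ∈ PT15.Cube I a := by
        intro k hk
        exact Function.update_of_ne (by rintro rfl; exact hk hiI) _ _
      rw [h] at hx
      have := hx i (Finset.notMem_erase i I)
      simp at this
    have hnotmax : ¬ MaximalCubeIn C ci := by
      intro hm
      exact hne (hm.2.2 (PT15.Cube I a) ⟨I, a, rfl⟩ hmaxC.2.1
        (by intro v hv; exact hsubc hv))
    obtain ⟨c', ⟨β, rfl⟩, hc'D⟩ :=
      hccc (I.erase i) ci ⟨Function.update a i false, rfl⟩
        (fun v hv => hmaxC.2.1 (hsubc hv)) hnotmax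
    exact ⟨β, hc'D⟩
  choose! β hβ using hstep
  refine ⟨fun j => !(β j.1 j.1), ?_⟩
  have hmem : ∀ z : {i // i ∈ I} → Bool, z ≠ (fun j => !(β j.1 j.1)) →
      z ∈ proj I '' D := by
    intro z hz
    have : ∃ j : {i // i ∈ I}, z j ≠ !(β j.1 j.1) := by
      by_contra h
      push_neg at h
      exact hz (funext h)
    obtain ⟨j, hj⟩ := this
    have hzj : z j = β j.1 j.1 := by
      cases h1 : z j <;> cases h2 : β j.1 j.1 <;> simp_all
    refine ⟨fun k => if h : k ∈ I then z ⟨k, h⟩ else β j.1 k, hβ j.1 j.2 ?_, ?_⟩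
    · intro k hk
      by_cases hkI : k ∈ I
      · have hkj : k = j.1 := by
          by_contra hne
          exact hk (Finset.mem_erase.2 ⟨hne, hkI⟩)
        subst hkj
        simp only [dif_pos hkI]
        exact hzj
      · simp only [dif_neg hkI]
    · funext k
      show (if h : k.1 ∈ I then z ⟨k.1, h⟩ else β j.1 k.1) = z k
      rw [dif_pos k.2]
  apply Set.ext
  intro z
  constructor
  · intro hzD hzw
    rw [Set.mem_singleton_iff] at hzw
    -- otherwise D shatters I; extremality of D gives a cube of colour I inside D,
    -- which by uniqueness must be the maximal cube c itself, contradicting hnotD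
    have hshat : Shatters D I := by
      apply Set.eq_univ_of_forall
      intro z'
      by_cases hz' : z' = (fun j => !(β j.1 j.1))
      · rw [hz', ← hzw]; exact hzD
      · exact hmem z' hz'
    obtain ⟨c', ⟨a', rfl⟩, hc'D⟩ := hD I hshat
    have heq : PT15.Cube I a' = PT15.Cube I a :=
      PT15.cube_unique hCext hmaxC (fun v hv => hDC (hc'D hv))
    have : PT15.Cube I a ⊆ D := heq ▸ hc'D
    exact hnotD this
  · intro hz
    exact hmem z hz
end
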